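/- arXiv:2104.03582 — 7 statements merged into one kernel-verified Lean document; each statement's English description precedes it below -/
import Mathlib

section
/- Let T be a locally finite tree with root o such that deg(v) ≥ 1 for all v. Then for every ε > 0 and every finitely supported φ: V → ℝ, (1-ε) Σ_v deg(v) φ(v)² - (1/ε) Σ_v φ(v)² ≤ (1/2) Σ_{v ∼ w} (φ(v) - φ(w))². -/
/-- For a locally finite tree with `deg ≥ 1` everywhere, every
`ε > 0` and finitely supported `φ`:
`(1-ε) Σ_v deg(v) φ(v)² - (1/ε) Σ_v φ(v)² ≤ (1/2) Σ_{v∼w} (φ(v)-φ(w))²`. -/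
theorem tree_form_lower_bound
    {V : Type*} (G : SimpleGraph V) [G.LocallyFinite] [DecidableRel G.Adj]
    (htree : G.IsTree)
    (hdeg : ∀ v, 1 ≤ G.degree v)
    (ε : ℝ) (hε : 0 < ε)
    (φ : V → ℝ) (hφ : (Function.support φ).Finite) :
    (1 - ε) * ∑' v : V, (G.degree v : ℝ) * φ v ^ 2
        - (1 / ε) * ∑' v : V, φ v ^ 2
      ≤ (1/2) * ∑' p : V × V, (if G.Adj p.1 p.2 then (φ p.1 - φ p.2) ^ 2 else 0) := by
  classical
  obtain ⟨o⟩ : Nonempty V := htree.isConnected.nonempty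
  have huniq := htree.existsUnique_path
  set P : ∀ v, G.Walk v o := fun v => (huniq v o).choose with hPdef
  have hP : ∀ v, (P v).IsPath := fun v => (huniq v o).choose_spec.1
  have hPu : ∀ v (q : G.Walk v o), q.IsPath → q = P v :=
    fun v q hq => (huniq v o).choose_spec.2 q hq
  set pa : V → V := fun v => (P v).getVert 1 with hpadef
  have hpao : pa o = o := by
    have h0 : (SimpleGraph.Walk.nil : G.Walk o o) = P o := hPu o _ SimpleGraph.Walk.IsPath.nil
    simp only [hpadef, ← h0]
    exact SimpleGraph.Walk.getVert_of_length_le _ (by simp)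
  have hadj : ∀ v, v ≠ o → G.Adj v (pa v) := fun v hv =>
    SimpleGraph.Walk.adj_snd (SimpleGraph.Walk.not_nil_of_ne hv)
  -- core acyclicity consequence
  have hcontra : ∀ u w : V, u ≠ w → u ∈ (P w).support → w ∈ (P u).support → False := by
    intro u w hne hu hw
    have hdrop : (P w).dropUntil u hu = P u := hPu u _ ((hP w).dropUntil hu)
    have hw' : w ∈ ((P w).dropUntil u hu).support := by rw [hdrop]; exact hw
    have hnodup := (hP w).support_nodup
    rw [← (P w).take_spec hu, SimpleGraph.Walk.support_append] at hnodup
    have hdisj := List.disjoint_of_nodup_append hnodup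
    have hw_take : w ∈ ((P w).takeUntil u hu).support := SimpleGraph.Walk.start_mem_support _
    have hw_tail : w ∈ ((P w).dropUntil u hu).support.tail := by
      rw [SimpleGraph.Walk.support_eq_cons] at hw'
      rcases List.mem_cons.mp hw' with h | h
      · exact absurd h.symm hne
      · exact h
    exact hdisj hw_take hw_tail
  have hstep : ∀ a b : V, G.Adj a b → pa a ≠ b → a ∈ (P b).support := by
    intro a b hab hpa
    by_contra ha
    have hp' : (SimpleGraph.Walk.cons hab (P b)).IsPath := (hP b).cons ha
    have heq := hPu a _ hp'
    apply hpa
    have h1 : pa a = (SimpleGraph.Walk.cons hab (P b)).getVert 1 := by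
      simp only [hpadef, ← heq]
    rw [h1, SimpleGraph.Walk.getVert_cons_succ, SimpleGraph.Walk.getVert_zero]
  have keylem : ∀ u w : V, G.Adj u w → pa u = w ∨ pa w = u := by
    intro u w hadj'
    by_contra hc
    push_neg at hc
    exact hcontra u w (G.ne_of_adj hadj') (hstep u w hadj' hc.1) (hstep w u hadj'.symm hc.2)
  have htwo : ∀ u w : V, u ≠ w → pa u = w → pa w = u → False := by
    intro u w hne h1 h2
    have huo : u ≠ o := by rintro rfl; rw [hpao] at h1; exact hne h1
    have hwo : w ≠ o := by rintro rfl; rw [hpao] at h2; exact hne h2.symm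
    have hlu : 0 < (P u).length :=
      SimpleGraph.Walk.not_nil_iff_lt_length.mp (SimpleGraph.Walk.not_nil_of_ne huo)
    have hlw : 0 < (P w).length :=
      SimpleGraph.Walk.not_nil_iff_lt_length.mp (SimpleGraph.Walk.not_nil_of_ne hwo)
    have hu : u ∈ (P w).support :=
      SimpleGraph.Walk.mem_support_iff_exists_getVert.mpr ⟨1, h2, hlw⟩
    have hw : w ∈ (P u).support :=
      SimpleGraph.Walk.mem_support_iff_exists_getVert.mpr ⟨1, h1, hlu⟩
    exact hcontra u w hne hu hw
  -- finite sets
  set t : Finset V := hφ.toFinset with htdef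
  have hmemt : ∀ v : V, v ∈ t ↔ φ v ≠ 0 := fun v => by
    simp [htdef, Function.mem_support]
  set F : Finset V := t ∪ t.biUnion (fun v => G.neighborFinset v) with hFdef
  set F2 : Finset V := F ∪ F.image pa with hF2def
  set A : Finset V := F.erase o with hAdef
  -- tsum reductions
  have hS1 : ∑' v : V, (G.degree v : ℝ) * φ v ^ 2 = ∑ v ∈ t, (G.degree v : ℝ) * φ v ^ 2 := by
    apply tsum_eq_sum
    intro v hv
    have : φ v = 0 := by by_contra h; exact hv ((hmemt v).mpr h)
    simp [this]
  have hS2 : ∑' v : V, φ v ^ 2 = ∑ v ∈ t, φ v ^ 2 := by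
    apply tsum_eq_sum
    intro v hv
    have : φ v = 0 := by by_contra h; exact hv ((hmemt v).mpr h)
    simp [this]
  have hS3 : (∑' p : V × V, (if G.Adj p.1 p.2 then (φ p.1 - φ p.2) ^ 2 else 0))
      = ∑ p ∈ F2 ×ˢ F2, (if G.Adj p.1 p.2 then (φ p.1 - φ p.2) ^ 2 else 0) := by
    apply tsum_eq_sum
    intro p hp
    split_ifs with hAdj
    · by_contra hne0
      have hφne : φ p.1 ≠ φ p.2 := by
        intro h; apply hne0; rw [h]; ring
      have hmem : p.1 ∈ F2 ∧ p.2 ∈ F2 := by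
        rcases ne_or_eq (φ p.1) 0 with h1 | h1
        · have hp1 : p.1 ∈ t := (hmemt p.1).mpr h1
          have hp1F : p.1 ∈ F := by rw [hFdef]; exact Finset.mem_union_left _ hp1
          have hp2F : p.2 ∈ F := by
            rw [hFdef]
            refine Finset.mem_union_right _ (Finset.mem_biUnion.mpr ⟨p.1, hp1, ?_⟩)
            rw [SimpleGraph.mem_neighborFinset]; exact hAdj
          exact ⟨Finset.mem_union_left _ hp1F, Finset.mem_union_left _ hp2F⟩
        · have h2 : φ p.2 ≠ 0 := by rw [h1] at hφne; exact fun h => hφne h.symm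
          have hp2 : p.2 ∈ t := (hmemt p.2).mpr h2
          have hp2F : p.2 ∈ F := by rw [hFdef]; exact Finset.mem_union_left _ hp2
          have hp1F : p.1 ∈ F := by
            rw [hFdef]
            refine Finset.mem_union_right _ (Finset.mem_biUnion.mpr ⟨p.2, hp2, ?_⟩)
            rw [SimpleGraph.mem_neighborFinset]; exact hAdj.symm
          exact ⟨Finset.mem_union_left _ hp1F, Finset.mem_union_left _ hp2F⟩
      exact hp (Finset.mem_product.mpr hmem)
    · rfl
  rcases le_or_gt ε 1 with hε1 | hε1
  · -- main case ε ≤ 1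
    rw [hS1, hS2, hS3]
    have hεpos := hε
    -- edge sets
    set E1 : Finset (V × V) := A.image (fun v => (v, pa v)) with hE1def
    set E2 : Finset (V × V) := A.image (fun v => (pa v, v)) with hE2def
    have hAmem : ∀ v ∈ A, v ≠ o ∧ v ∈ F := by
      intro v hv
      rw [hAdef, Finset.mem_erase] at hv
      exact hv
    have hsubE : E1 ∪ E2 ⊆ F2 ×ˢ F2 := by
      intro p hp
      rw [Finset.mem_union] at hp
      rcases hp with hp | hp <;> obtain ⟨v, hv, rfl⟩ := Finset.mem_image.mp hp <;>
        obtain ⟨hvo, hvF⟩ := hAmem v hv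
      · exact Finset.mem_product.mpr ⟨Finset.mem_union_left _ hvF,
          Finset.mem_union_right _ (Finset.mem_image_of_mem pa hvF)⟩
      · exact Finset.mem_product.mpr ⟨Finset.mem_union_right _ (Finset.mem_image_of_mem pa hvF),
          Finset.mem_union_left _ hvF⟩
    have hdisjE : Disjoint E1 E2 := by
      rw [Finset.disjoint_left]
      rintro p hp1 hp2
      obtain ⟨v, hv, rfl⟩ := Finset.mem_image.mp hp1
      obtain ⟨w, hw, hvw⟩ := Finset.mem_image.mp hp2
      have h1 : pa w = v := congrArg Prod.fst hvw
      have h2 : w = pa v := congrArg Prod.snd hvw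
      by_cases hvweq : v = w
      · subst hvweq
        have := hadj v (hAmem v hv).1
        rw [← h2] at this
        exact G.irrefl this
      · exact htwo v w hvweq h2.symm h1
    have hinj1 : ∀ x ∈ A, ∀ y ∈ A, (fun v => (v, pa v)) x = (fun v => (v, pa v)) y → x = y :=
      fun x _ y _ h => congrArg Prod.fst h
    have hinj2 : ∀ x ∈ A, ∀ y ∈ A, (fun v => (pa v, v)) x = (fun v => (pa v, v)) y → x = y :=
      fun x _ y _ h => congrArg Prod.snd h
    have hsum1 : ∑ p ∈ E1, (if G.Adj p.1 p.2 then (φ p.1 - φ p.2) ^ 2 else 0)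
        = ∑ v ∈ A, (φ v - φ (pa v)) ^ 2 := by
      rw [hE1def, Finset.sum_image hinj1]
      refine Finset.sum_congr rfl fun v hv => ?_
      have := hadj v (hAmem v hv).1
      simp [this]
    have hsum2 : ∑ p ∈ E2, (if G.Adj p.1 p.2 then (φ p.1 - φ p.2) ^ 2 else 0)
        = ∑ v ∈ A, (φ v - φ (pa v)) ^ 2 := by
      rw [hE2def, Finset.sum_image hinj2]
      refine Finset.sum_congr rfl fun v hv => ?_
      have h := (hadj v (hAmem v hv).1).symm
      simp only [h, if_true]
      ring
    have h2X : 2 * ∑ v ∈ A, (φ v - φ (pa v)) ^ 2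
        ≤ ∑ p ∈ F2 ×ˢ F2, (if G.Adj p.1 p.2 then (φ p.1 - φ p.2) ^ 2 else 0) := by
      have hle : ∑ p ∈ E1 ∪ E2, (if G.Adj p.1 p.2 then (φ p.1 - φ p.2) ^ 2 else 0)
          ≤ ∑ p ∈ F2 ×ˢ F2, (if G.Adj p.1 p.2 then (φ p.1 - φ p.2) ^ 2 else 0) := by
        refine Finset.sum_le_sum_of_subset_of_nonneg hsubE fun p _ _ => ?_
        split_ifs <;> positivity
      rw [Finset.sum_union hdisjE, hsum1, hsum2] at hle
      linarith
    -- per-edge estimate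
    have hX1 : ∑ v ∈ A, ((1 - ε) * φ (pa v) ^ 2 + (1 - 1/ε) * φ v ^ 2)
        ≤ ∑ v ∈ A, (φ v - φ (pa v)) ^ 2 := by
      refine Finset.sum_le_sum fun v _ => ?_
      have hinv : ε * (1/ε) = 1 := by field_simp
      nlinarith [sq_nonneg (ε * φ (pa v) - φ v), sq_nonneg (φ v), hε, hinv,
        mul_pos hε hε]
    -- counting estimate
    have hcore : ∑ w ∈ t, ((G.degree w : ℝ) - 1) * φ w ^ 2 ≤ ∑ v ∈ A, φ (pa v) ^ 2 := by
      have hfilter : ∑ v ∈ A with pa v ∈ t, φ (pa v) ^ 2 ≤ ∑ v ∈ A, φ (pa v) ^ 2 :=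
        Finset.sum_le_sum_of_subset_of_nonneg (Finset.filter_subset _ _)
          (fun v _ _ => by positivity)
      have hfib : ∑ w ∈ t, ∑ v ∈ A with pa v = w, φ w ^ 2
          = ∑ v ∈ A with pa v ∈ t, φ (pa v) ^ 2 :=
        Finset.sum_fiberwise_eq_sum_filter' A t pa (fun w => φ w ^ 2)
      have hterm : ∀ w ∈ t, ((G.degree w : ℝ) - 1) * φ w ^ 2
          ≤ ∑ v ∈ A with pa v = w, φ w ^ 2 := by
        intro w hw
        rw [Finset.sum_const, nsmul_eq_mul]
        have hC : (G.neighborFinset w).filter (fun u => pa u = w)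
            ⊆ A.filter (fun v => pa v = w) := by
          intro u hu
          rw [Finset.mem_filter, SimpleGraph.mem_neighborFinset] at hu
          obtain ⟨hun, hupa⟩ := hu
          have huw : u ≠ w := (G.ne_of_adj hun).symm
          have huo : u ≠ o := by
            rintro rfl
            rw [hpao] at hupa
            exact huw hupa
          have huF : u ∈ F := by
            rw [hFdef]
            refine Finset.mem_union_right _ (Finset.mem_biUnion.mpr ⟨w, hw, ?_⟩)
            rw [SimpleGraph.mem_neighborFinset]; exact hun
          exact Finset.mem_filter.mpr ⟨by rw [hAdef]; exact Finset.mem_erase.mpr ⟨huo, huF⟩, hupa⟩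
        have hCc : (G.neighborFinset w).filter (fun u => ¬ pa u = w) ⊆ {pa w} := by
          intro u hu
          rw [Finset.mem_filter, SimpleGraph.mem_neighborFinset] at hu
          obtain ⟨hun, hupa⟩ := hu
          rcases keylem u w hun.symm with h | h
          · exact absurd h hupa
          · rw [Finset.mem_singleton]; exact h.symm
        have hsplit := Finset.card_filter_add_card_filter_not
          (s := G.neighborFinset w) (p := fun u => pa u = w)
        have hcc1 : ((G.neighborFinset w).filter (fun u => ¬ pa u = w)).card ≤ 1 :=
          le_trans (Finset.card_le_card hCc) (by simp)
        have hc2 : ((G.neighborFinset w).filter (fun u => pa u = w)).card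
            ≤ (A.filter (fun v => pa v = w)).card := Finset.card_le_card hC
        have hdegw : G.degree w = (G.neighborFinset w).card := rfl
        have hnat : G.degree w ≤ (A.filter (fun v => pa v = w)).card + 1 := by omega
        have hreal : (G.degree w : ℝ) - 1 ≤ ((A.filter (fun v => pa v = w)).card : ℝ) := by
          have := (Nat.cast_le (α := ℝ)).mpr hnat
          push_cast at this
          linarith
        have hφnn : (0:ℝ) ≤ φ w ^ 2 := by positivity
        exact mul_le_mul_of_nonneg_right hreal hφnn
      calc ∑ w ∈ t, ((G.degree w : ℝ) - 1) * φ w ^ 2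
          ≤ ∑ w ∈ t, ∑ v ∈ A with pa v = w, φ w ^ 2 := Finset.sum_le_sum hterm
        _ = ∑ v ∈ A with pa v ∈ t, φ (pa v) ^ 2 := hfib
        _ ≤ ∑ v ∈ A, φ (pa v) ^ 2 := hfilter
    -- A-sum of φ² bounded by t-sum
    have hAsub : ∑ v ∈ A, φ v ^ 2 ≤ ∑ v ∈ t, φ v ^ 2 := by
      have heq : ∑ v ∈ A ∩ t, φ v ^ 2 = ∑ v ∈ A, φ v ^ 2 := by
        refine Finset.sum_subset Finset.inter_subset_left fun v hv hvn => ?_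
        have : v ∉ t := fun h => hvn (Finset.mem_inter.mpr ⟨hv, h⟩)
        have : φ v = 0 := by by_contra h; exact this ((hmemt v).mpr h)
        simp [this]
      rw [← heq]
      exact Finset.sum_le_sum_of_subset_of_nonneg Finset.inter_subset_right
        (fun v _ _ => by positivity)
    -- assemble
    set D : ℝ := ∑ v ∈ t, (G.degree v : ℝ) * φ v ^ 2 with hDdef
    set Sx : ℝ := ∑ v ∈ t, φ v ^ 2 with hSxdef
    have hSx0 : 0 ≤ Sx := Finset.sum_nonneg fun v _ => by positivity
    have hDS : ∑ w ∈ t, ((G.degree w : ℝ) - 1) * φ w ^ 2 = D - Sx := by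
      rw [hDdef, hSxdef, ← Finset.sum_sub_distrib]
      exact Finset.sum_congr rfl fun v _ => by ring
    have hP2 : (1 - ε) * (D - Sx) ≤ (1 - ε) * ∑ v ∈ A, φ (pa v) ^ 2 := by
      refine mul_le_mul_of_nonneg_left ?_ (by linarith)
      rw [← hDS]; exact hcore
    have hP3 : (1 - 1/ε) * ∑ v ∈ A, φ v ^ 2 ≥ (1 - 1/ε) * Sx := by
      have hcoef : 1 - 1/ε ≤ 0 := by
        have : 1 ≤ 1/ε := (le_div_iff₀ hε).mpr (by linarith)
        linarith
      exact mul_le_mul_of_nonpos_left hAsub hcoef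
    have hsplitsum : ∑ v ∈ A, ((1 - ε) * φ (pa v) ^ 2 + (1 - 1/ε) * φ v ^ 2)
        = (1 - ε) * ∑ v ∈ A, φ (pa v) ^ 2 + (1 - 1/ε) * ∑ v ∈ A, φ v ^ 2 := by
      rw [Finset.sum_add_distrib, Finset.mul_sum, Finset.mul_sum]
    have hring : (1 - ε) * (D - Sx) + (1 - 1/ε) * Sx - ((1 - ε) * D - (1/ε) * Sx)
        = ε * Sx := by ring
    have hεSx : 0 ≤ ε * Sx := mul_nonneg hε.le hSx0
    linarith [hX1, h2X, hsplitsum ▸ hX1]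
  · -- easy case 1 < ε
    have hA : 0 ≤ ∑' v : V, (G.degree v : ℝ) * φ v ^ 2 :=
      tsum_nonneg fun v => by positivity
    have hB : 0 ≤ ∑' v : V, φ v ^ 2 := tsum_nonneg fun v => by positivity
    have hC : 0 ≤ ∑' p : V × V, (if G.Adj p.1 p.2 then (φ p.1 - φ p.2) ^ 2 else 0) :=
      tsum_nonneg fun p => by split_ifs <;> positivity
    have h1 : (1 - ε) * ∑' v : V, (G.degree v : ℝ) * φ v ^ 2 ≤ 0 :=
      mul_nonpos_of_nonpos_of_nonneg (by linarith) hA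
    have h2 : 0 ≤ (1/ε) * ∑' v : V, φ v ^ 2 :=
      mul_nonneg (by positivity) hB
    linarith
end

section
/- Let G = (V,E) be a locally finite graph and φ: V → ℝ finitely supported. For t ≥ 0 set Ω_t = {v : φ(v)² > t}. Then the coarea formula holds: ∫_0^∞ |∂Ω_t| dt = (1/2) Σ_{v ∼ w} |φ(v)² - φ(w)²|, where ∂W = {(v,w) ∈ W × (V∖W) : v ∼ w} and the sum on the right is over ordered pairs of adjacent vertices. -/
open MeasureTheory

/-- Coarea formula.  For a locally finite graph and a finitely
supported `φ : V → ℝ`, with `Ω_t = {v : φ(v)² > t}` and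
`∂W = {(v,w) : v ∈ W, w ∉ W, v ∼ w}`:
`∫_0^∞ |∂Ω_t| dt = (1/2) Σ_{v∼w} |φ(v)² - φ(w)²|`
(sum over ordered pairs of adjacent vertices). -/
theorem coarea_formula
    {V : Type*} (G : SimpleGraph V) [G.LocallyFinite] [DecidableRel G.Adj]
    (φ : V → ℝ) (hφ : (Function.support φ).Finite) :
    (∫ t in Set.Ioi (0 : ℝ),
        (({p : V × V | G.Adj p.1 p.2 ∧ t < φ p.1 ^ 2 ∧ ¬ t < φ p.2 ^ 2}.ncard : ℝ)))
      = (1/2) * ∑' p : V × V,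
          (if G.Adj p.1 p.2 then |φ p.1 ^ 2 - φ p.2 ^ 2| else 0) := by
  classical
  set E : Finset (V × V) :=
    hφ.toFinset.biUnion (fun v => (G.neighborFinset v).image (fun w => (v, w))) with hE
  have hmemE : ∀ p : V × V, p ∈ E ↔ φ p.1 ≠ 0 ∧ G.Adj p.1 p.2 := by
    rintro ⟨v, w⟩
    simp only [hE, Finset.mem_biUnion, Finset.mem_image, Set.Finite.mem_toFinset,
      Function.mem_support, SimpleGraph.mem_neighborFinset]
    constructor
    · rintro ⟨a, ha, b, hb, h⟩
      cases h
      exact ⟨ha, hb⟩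
    · rintro ⟨h1, h2⟩; exact ⟨v, h1, w, h2, rfl⟩
  -- pointwise formula for the integrand on Ioi 0
  have hpt : ∀ t ∈ Set.Ioi (0 : ℝ),
      (({p : V × V | G.Adj p.1 p.2 ∧ t < φ p.1 ^ 2 ∧ ¬ t < φ p.2 ^ 2}.ncard : ℝ))
        = ∑ p ∈ E, (Set.Ico (φ p.2 ^ 2) (φ p.1 ^ 2)).indicator (fun _ => (1 : ℝ)) t := by
    intro t ht
    have ht0 : (0 : ℝ) < t := ht
    have hset : {p : V × V | G.Adj p.1 p.2 ∧ t < φ p.1 ^ 2 ∧ ¬ t < φ p.2 ^ 2}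
        = ↑(E.filter (fun p => φ p.2 ^ 2 ≤ t ∧ t < φ p.1 ^ 2)) := by
      ext p
      simp only [Set.mem_setOf_eq, Finset.coe_filter, hmemE, not_lt]
      constructor
      · rintro ⟨hadj, h1, h2⟩
        have hp1 : φ p.1 ≠ 0 := by
          intro h0
          rw [h0] at h1
          simp at h1
          linarith
        exact ⟨⟨hp1, hadj⟩, h2, h1⟩
      · rintro ⟨⟨_, hadj⟩, h2, h1⟩
        exact ⟨hadj, h1, h2⟩
    rw [hset, Set.ncard_coe_finset, Finset.card_filter]
    push_cast
    refine Finset.sum_congr rfl (fun p _ => ?_)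
    by_cases h : φ p.2 ^ 2 ≤ t ∧ t < φ p.1 ^ 2
    · rw [if_pos h, Set.indicator_of_mem (Set.mem_Ico.2 h)]
    · rw [if_neg h, Set.indicator_of_notMem (fun hm => h (Set.mem_Ico.1 hm))]
  have hint : ∀ p : V × V,
      Integrable ((Set.Ico (φ p.2 ^ 2) (φ p.1 ^ 2)).indicator (fun _ => (1 : ℝ)))
        (volume.restrict (Set.Ioi (0 : ℝ))) := by
    intro p
    refine Integrable.restrict ?_
    rw [integrable_indicator_iff measurableSet_Ico]
    exact integrableOn_const measure_Ico_lt_top.ne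
  have hival : ∀ p : V × V,
      (∫ t in Set.Ioi (0 : ℝ),
          (Set.Ico (φ p.2 ^ 2) (φ p.1 ^ 2)).indicator (fun _ => (1 : ℝ)) t)
        = max (φ p.1 ^ 2 - φ p.2 ^ 2) 0 := by
    intro p
    rw [MeasureTheory.setIntegral_indicator measurableSet_Ico, setIntegral_const, smul_eq_mul,
      mul_one]
    rcases eq_or_lt_of_le (sq_nonneg (φ p.2)) with hb | hb
    · have hs : Set.Ioi (0 : ℝ) ∩ Set.Ico (φ p.2 ^ 2) (φ p.1 ^ 2) = Set.Ioo 0 (φ p.1 ^ 2) := by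
        rw [← hb]
        ext x
        simp only [Set.mem_inter_iff, Set.mem_Ioi, Set.mem_Ico, Set.mem_Ioo]
        constructor
        · rintro ⟨h1, _, h2⟩; exact ⟨h1, h2⟩
        · rintro ⟨h1, h2⟩; exact ⟨h1, le_of_lt h1, h2⟩
      rw [hs, measureReal_def, Real.volume_Ioo, ENNReal.toReal_ofReal', ← hb]
    · have hs : Set.Ioi (0 : ℝ) ∩ Set.Ico (φ p.2 ^ 2) (φ p.1 ^ 2)
          = Set.Ico (φ p.2 ^ 2) (φ p.1 ^ 2) := by
        apply Set.inter_eq_self_of_subset_right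
        intro x hx
        exact lt_of_lt_of_le hb (Set.mem_Ico.1 hx).1
      rw [hs, measureReal_def, Real.volume_Ico, ENNReal.toReal_ofReal']
  -- compute the integral
  have hLHS : (∫ t in Set.Ioi (0 : ℝ),
      (({p : V × V | G.Adj p.1 p.2 ∧ t < φ p.1 ^ 2 ∧ ¬ t < φ p.2 ^ 2}.ncard : ℝ)))
      = ∑ p ∈ E, max (φ p.1 ^ 2 - φ p.2 ^ 2) 0 := by
    rw [MeasureTheory.setIntegral_congr_fun measurableSet_Ioi hpt,
      MeasureTheory.integral_finset_sum E (fun p _ => hint p)]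
    exact Finset.sum_congr rfl (fun p _ => hival p)
  -- now the combinatorial side
  set F : Finset (V × V) := E ∪ E.image Prod.swap with hF
  have hmemF : ∀ p : V × V, p ∈ F ↔ (φ p.1 ≠ 0 ∨ φ p.2 ≠ 0) ∧ G.Adj p.1 p.2 := by
    intro p
    simp only [hF, Finset.mem_union, Finset.mem_image, hmemE]
    constructor
    · rintro (⟨h1, h2⟩ | ⟨q, ⟨h1, h2⟩, rfl⟩)
      · exact ⟨Or.inl h1, h2⟩
      · exact ⟨Or.inr h1, h2.symm⟩
    · rintro ⟨h1 | h1, h2⟩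
      · exact Or.inl ⟨h1, h2⟩
      · exact Or.inr ⟨p.swap, ⟨h1, h2.symm⟩, Prod.swap_swap p⟩
  set h : V × V → ℝ := fun p => if G.Adj p.1 p.2 then max (φ p.1 ^ 2 - φ p.2 ^ 2) 0 else 0
    with hh
  have h1 : ∑ p ∈ E, max (φ p.1 ^ 2 - φ p.2 ^ 2) 0 = ∑ p ∈ F, h p := by
    have hE1 : ∑ p ∈ E, max (φ p.1 ^ 2 - φ p.2 ^ 2) 0 = ∑ p ∈ E, h p := by
      refine Finset.sum_congr rfl (fun p hp => ?_)
      rw [hh]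
      simp only
      rw [if_pos ((hmemE p).1 hp).2]
    rw [hE1]
    refine Finset.sum_subset Finset.subset_union_left (fun p hp hpE => ?_)
    rw [hh]
    simp only
    by_cases hadj : G.Adj p.1 p.2
    · have hp1 : φ p.1 = 0 := by
        by_contra h0
        exact hpE ((hmemE p).2 ⟨h0, hadj⟩)
      rw [if_pos hadj, hp1, max_eq_right (by nlinarith [sq_nonneg (φ p.2)])]
    · rw [if_neg hadj]
  have hswap : ∑ p ∈ F, h p = ∑ p ∈ F, h p.swap := by
    apply Finset.sum_nbij' (fun p => p.swap) (fun p => p.swap)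
    · intro p hp
      rw [hmemF] at hp ⊢
      simp only [Prod.fst_swap, Prod.snd_swap]
      exact ⟨hp.1.symm, hp.2.symm⟩
    · intro p hp
      rw [hmemF] at hp ⊢
      simp only [Prod.fst_swap, Prod.snd_swap]
      exact ⟨hp.1.symm, hp.2.symm⟩
    · intro p _; exact Prod.swap_swap p
    · intro p _; exact Prod.swap_swap p
    · intro p _; rfl
  have habs : ∀ p : V × V, h p + h p.swap = if G.Adj p.1 p.2 then |φ p.1 ^ 2 - φ p.2 ^ 2| else 0 := by
    intro p
    rw [hh]
    by_cases hadj : G.Adj p.1 p.2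
    · simp only [if_pos hadj, Prod.fst_swap, Prod.snd_swap, if_pos hadj.symm]
      rcases le_total (φ p.1 ^ 2) (φ p.2 ^ 2) with hle | hle
      · rw [max_eq_right (by linarith), max_eq_left (by linarith), abs_of_nonpos (by linarith)]
        ring
      · rw [max_eq_left (by linarith), max_eq_right (by linarith), abs_of_nonneg (by linarith)]
        ring
    · have h2 : ¬ G.Adj p.2 p.1 := fun hh' => hadj hh'.symm
      simp [hadj, h2]
  have htsum : (∑' p : V × V, (if G.Adj p.1 p.2 then |φ p.1 ^ 2 - φ p.2 ^ 2| else 0))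
      = ∑ p ∈ F, (if G.Adj p.1 p.2 then |φ p.1 ^ 2 - φ p.2 ^ 2| else 0) := by
    apply tsum_eq_sum
    intro p hp
    rw [hmemF] at hp
    by_cases hadj : G.Adj p.1 p.2
    · have h1 : φ p.1 = 0 := by
        by_contra h0; exact hp ⟨Or.inl h0, hadj⟩
      have h2 : φ p.2 = 0 := by
        by_contra h0; exact hp ⟨Or.inr h0, hadj⟩
      simp [hadj, h1, h2]
    · simp [hadj]
  rw [hLHS, h1, htsum]
  have : ∑ p ∈ F, (if G.Adj p.1 p.2 then |φ p.1 ^ 2 - φ p.2 ^ 2| else 0)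
      = ∑ p ∈ F, (h p + h p.swap) := by
    exact Finset.sum_congr rfl (fun p _ => (habs p).symm)
  rw [this, Finset.sum_add_distrib, ← hswap]
  ring
end

section
/- Let G be a locally finite graph and φ: V → ℝ finitely supported. Then (1/2) Σ_{v∼w} |φ(v)² - φ(w)²| ≤ ((1/2) Σ_{v∼w} (φ(v)-φ(w))²)^{1/2} · ((1/2) Σ_{v∼w} (φ(v)+φ(w))²)^{1/2}, and (1/2) Σ_{v∼w}(φ(v)+φ(w))² = 2 Σ_v deg(v) φ(v)² - (1/2) Σ_{v∼w}(φ(v)-φ(w))². -/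
/-- For a locally finite graph and finitely supported `φ`:
`(1/2) Σ_{v∼w} |φ(v)²-φ(w)²| ≤ √((1/2) Σ (φ(v)-φ(w))²) · √((1/2) Σ (φ(v)+φ(w))²)`
and `(1/2) Σ (φ(v)+φ(w))² = 2 Σ_v deg(v)φ(v)² - (1/2) Σ (φ(v)-φ(w))²`. -/
theorem coarea_cauchy_schwarz
    {V : Type*} (G : SimpleGraph V) [G.LocallyFinite] [DecidableRel G.Adj]
    (φ : V → ℝ) (hφ : (Function.support φ).Finite) :
    ((1/2) * ∑' p : V × V, (if G.Adj p.1 p.2 then |φ p.1 ^ 2 - φ p.2 ^ 2| else 0)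
      ≤ Real.sqrt ((1/2) * ∑' p : V × V,
            (if G.Adj p.1 p.2 then (φ p.1 - φ p.2) ^ 2 else 0))
        * Real.sqrt ((1/2) * ∑' p : V × V,
            (if G.Adj p.1 p.2 then (φ p.1 + φ p.2) ^ 2 else 0))) ∧
    ((1/2) * ∑' p : V × V, (if G.Adj p.1 p.2 then (φ p.1 + φ p.2) ^ 2 else 0)
      = 2 * ∑' v : V, (G.degree v : ℝ) * φ v ^ 2
        - (1/2) * ∑' p : V × V,
            (if G.Adj p.1 p.2 then (φ p.1 - φ p.2) ^ 2 else 0)) := by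
  classical
  set S : Finset V := hφ.toFinset with hS
  set S' : Finset V := S ∪ S.biUnion (fun v => G.neighborFinset v) with hS'
  set P : Finset (V × V) := S' ×ˢ S' with hP
  have hSmem : ∀ v : V, φ v ≠ 0 → v ∈ S := by
    intro v hv; simp [hS, Function.mem_support, hv]
  have hsub : ∀ v : V, φ v ≠ 0 → G.neighborFinset v ⊆ S' := by
    intro v hv w hw
    exact Finset.mem_union_right _ (Finset.mem_biUnion.2 ⟨v, hSmem v hv, hw⟩)
  have hmem : ∀ p : V × V, G.Adj p.1 p.2 → (φ p.1 ≠ 0 ∨ φ p.2 ≠ 0) → p ∈ P := by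
    rintro ⟨v, w⟩ hadj h
    have key : ∀ u u' : V, G.Adj u u' → φ u ≠ 0 → u ∈ S' ∧ u' ∈ S' := by
      intro u u' ha hu
      exact ⟨Finset.mem_union_left _ (hSmem u hu),
        hsub u hu (by simpa [SimpleGraph.mem_neighborFinset] using ha)⟩
    rcases h with h | h
    · exact Finset.mem_product.2 (key v w hadj h)
    · exact Finset.mem_product.2 (key w v hadj.symm h).symm
  have hzero : ∀ p : V × V, p ∉ P → G.Adj p.1 p.2 → φ p.1 = 0 ∧ φ p.2 = 0 := by
    intro p hp hadj
    constructor
    · by_contra h; exact hp (hmem p hadj (Or.inl h))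
    · by_contra h; exact hp (hmem p hadj (Or.inr h))
  -- Finite-sum versions
  set A : ℝ := ∑ p ∈ P, (if G.Adj p.1 p.2 then (φ p.1 - φ p.2) ^ 2 else 0) with hA
  set B : ℝ := ∑ p ∈ P, (if G.Adj p.1 p.2 then (φ p.1 + φ p.2) ^ 2 else 0) with hB
  set C : ℝ := ∑ p ∈ P, (if G.Adj p.1 p.2 then |φ p.1 ^ 2 - φ p.2 ^ 2| else 0) with hC
  set D : ℝ := ∑ v ∈ S', (G.degree v : ℝ) * φ v ^ 2 with hD
  have tA : (∑' p : V × V, (if G.Adj p.1 p.2 then (φ p.1 - φ p.2) ^ 2 else 0)) = A := by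
    refine tsum_eq_sum fun p hp => ?_
    by_cases h : G.Adj p.1 p.2
    · obtain ⟨h1, h2⟩ := hzero p hp h; simp [h, h1, h2]
    · simp [h]
  have tB : (∑' p : V × V, (if G.Adj p.1 p.2 then (φ p.1 + φ p.2) ^ 2 else 0)) = B := by
    refine tsum_eq_sum fun p hp => ?_
    by_cases h : G.Adj p.1 p.2
    · obtain ⟨h1, h2⟩ := hzero p hp h; simp [h, h1, h2]
    · simp [h]
  have tC : (∑' p : V × V, (if G.Adj p.1 p.2 then |φ p.1 ^ 2 - φ p.2 ^ 2| else 0)) = C := by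
    refine tsum_eq_sum fun p hp => ?_
    by_cases h : G.Adj p.1 p.2
    · obtain ⟨h1, h2⟩ := hzero p hp h; simp [h, h1, h2]
    · simp [h]
  have tD : (∑' v : V, (G.degree v : ℝ) * φ v ^ 2) = D := by
    refine tsum_eq_sum fun v hv => ?_
    have : φ v = 0 := by
      by_contra h
      exact hv (Finset.mem_union_left _ (hSmem v h))
    simp [this]
  -- the degree sum identity
  have E1 : (∑ p ∈ P, (if G.Adj p.1 p.2 then φ p.1 ^ 2 else 0)) = D := by
    rw [hP, Finset.sum_product, hD]
    refine Finset.sum_congr rfl fun v hv => ?_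
    by_cases h0 : φ v = 0
    · simp [h0]
    · have hfil : S'.filter (fun w => G.Adj v w) = G.neighborFinset v := by
        ext w
        simp only [Finset.mem_filter, SimpleGraph.mem_neighborFinset]
        exact ⟨fun h => h.2, fun h => ⟨hsub v h0 (by simpa [SimpleGraph.mem_neighborFinset]), h⟩⟩
      rw [← Finset.sum_filter, hfil]
      show (∑ _a ∈ G.neighborFinset v, φ v ^ 2) = _
      rw [Finset.sum_const, SimpleGraph.card_neighborFinset_eq_degree, nsmul_eq_mul]
  have E2 : (∑ p ∈ P, (if G.Adj p.1 p.2 then φ p.2 ^ 2 else 0)) = D := by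
    rw [← E1, hP, Finset.sum_product, Finset.sum_product, Finset.sum_comm]
    exact Finset.sum_congr rfl fun w _ => Finset.sum_congr rfl fun v _ => if_congr (G.adj_comm _ _) rfl rfl
  have hAB : A + B = 4 * D := by
    have h1 : A + B = ∑ p ∈ P, ((if G.Adj p.1 p.2 then (φ p.1 - φ p.2) ^ 2 else 0)
        + (if G.Adj p.1 p.2 then (φ p.1 + φ p.2) ^ 2 else 0)) := by
      rw [hA, hB, Finset.sum_add_distrib]
    have h2 : ∀ p ∈ P, (if G.Adj p.1 p.2 then (φ p.1 - φ p.2) ^ 2 else 0)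
        + (if G.Adj p.1 p.2 then (φ p.1 + φ p.2) ^ 2 else 0)
        = 2 * (if G.Adj p.1 p.2 then φ p.1 ^ 2 else 0)
          + 2 * (if G.Adj p.1 p.2 then φ p.2 ^ 2 else 0) := by
      intro p _
      by_cases h : G.Adj p.1 p.2 <;> simp [h] <;> ring
    rw [h1, Finset.sum_congr rfl h2, Finset.sum_add_distrib, ← Finset.mul_sum, ← Finset.mul_sum,
      E1, E2]
    ring
  -- Cauchy–Schwarz
  have hCS : C ≤ Real.sqrt A * Real.sqrt B := by
    have key := Real.sum_mul_le_sqrt_mul_sqrt P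
      (fun p => |if G.Adj p.1 p.2 then φ p.1 - φ p.2 else 0|)
      (fun p => |if G.Adj p.1 p.2 then φ p.1 + φ p.2 else 0|)
    have eC : (∑ p ∈ P, |if G.Adj p.1 p.2 then φ p.1 - φ p.2 else 0|
        * |if G.Adj p.1 p.2 then φ p.1 + φ p.2 else 0|) = C := by
      refine Finset.sum_congr rfl fun p _ => ?_
      by_cases h : G.Adj p.1 p.2
      · rw [← abs_mul]
        simp [h]
        rw [← abs_mul]; congr 1; ring
      · simp [h]
    have eA : (∑ p ∈ P, |if G.Adj p.1 p.2 then φ p.1 - φ p.2 else 0| ^ 2) = A := by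
      refine Finset.sum_congr rfl fun p _ => ?_
      rw [sq_abs]
      by_cases h : G.Adj p.1 p.2 <;> simp [h]
    have eB : (∑ p ∈ P, |if G.Adj p.1 p.2 then φ p.1 + φ p.2 else 0| ^ 2) = B := by
      refine Finset.sum_congr rfl fun p _ => ?_
      rw [sq_abs]
      by_cases h : G.Adj p.1 p.2 <;> simp [h]
    rwa [eC, eA, eB] at key
  have hAnn : 0 ≤ A := Finset.sum_nonneg fun p _ => by positivity
  have hBnn : 0 ≤ B := Finset.sum_nonneg fun p _ => by positivity
  have hsqrt : Real.sqrt ((1/2) * A) * Real.sqrt ((1/2) * B)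
      = (1/2) * (Real.sqrt A * Real.sqrt B) := by
    rw [Real.sqrt_mul (by norm_num : (0:ℝ) ≤ 1/2) A, Real.sqrt_mul (by norm_num : (0:ℝ) ≤ 1/2) B]
    have h2 : Real.sqrt (1/2) * Real.sqrt (1/2) = 1/2 := Real.mul_self_sqrt (by norm_num)
    calc Real.sqrt (1/2) * Real.sqrt A * (Real.sqrt (1/2) * Real.sqrt B)
        = (Real.sqrt (1/2) * Real.sqrt (1/2)) * (Real.sqrt A * Real.sqrt B) := by ring
      _ = (1/2) * (Real.sqrt A * Real.sqrt B) := by rw [h2]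
  rw [tA, tB, tC, tD]
  constructor
  · rw [hsqrt]; linarith
  · linarith
end

section
/- Let T be a locally finite tree and q': V → [0,∞) with d_T := deg + q' ≥ 2 pointwise. Then for every finitely supported φ with Σ_v φ(v)² = 1, writing Q(φ) = (1/2) Σ_{v∼w}(φ(v)-φ(w))² + Σ_v q'(v)φ(v)² and D(φ) = Σ_v d_T(v) φ(v)², one has D(φ) - 2√(D(φ) - 1) ≤ Q(φ) ≤ D(φ) + 2√(D(φ) - 1). -/
open SimpleGraph Walk Finset

section helpers
variable {V : Type*} [DecidableEq V] {G : SimpleGraph V} {r a b a' : V}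

private lemma aux_not_mem_support {p : G.Walk r a} (hp : p.length = G.dist r a)
    (hlt : G.dist r a < G.dist r b) : b ∉ p.support := by
  intro hb
  have h1 : G.dist r b ≤ (p.takeUntil b hb).length := SimpleGraph.dist_le _
  have h2 := p.length_takeUntil_le hb
  omega

omit [DecidableEq V] in
private lemma tree_concat_isPath {p : G.Walk r a} (hp : p.IsPath) (h : G.Adj a b)
    (hb : b ∉ p.support) : (p.concat h).IsPath := by
  rw [← isPath_reverse_iff, reverse_concat, cons_isPath_iff, isPath_reverse_iff,
    support_reverse]
  exact ⟨hp, by simpa using hb⟩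

private lemma tree_dist_ne (ht : G.IsTree) (h : G.Adj a b) :
    G.dist r a ≠ G.dist r b := by
  intro heq
  obtain ⟨p, hp, hpl⟩ := ht.isConnected.exists_path_of_dist r a
  obtain ⟨q, hq, hql⟩ := ht.isConnected.exists_path_of_dist r b
  have hb : b ∉ p.support := by
    intro hb
    have h1 : G.dist r b ≤ (p.takeUntil b hb).length := SimpleGraph.dist_le _
    have h2 : (p.takeUntil b hb).length + (p.dropUntil b hb).length = p.length := by
      rw [← Walk.length_append, Walk.take_spec]
    have h3 : (p.dropUntil b hb).length = 0 := by omega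
    exact h.ne' (Walk.eq_of_length_eq_zero h3)
  have hw : (p.concat h).IsPath := tree_concat_isPath hp h hb
  have := (ht.existsUnique_path r b).unique hw hq
  have : (p.concat h).length = q.length := by rw [this]
  rw [Walk.length_concat, hpl, hql] at this
  omega

private lemma tree_parent_unique (ht : G.IsTree) (h1 : G.Adj a b) (h2 : G.Adj a' b)
    (l1 : G.dist r a < G.dist r b) (l2 : G.dist r a' < G.dist r b) : a = a' := by
  obtain ⟨p, hp, hpl⟩ := ht.isConnected.exists_path_of_dist r a
  obtain ⟨p', hp', hpl'⟩ := ht.isConnected.exists_path_of_dist r a'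
  have hw : (p.concat h1).IsPath := tree_concat_isPath hp h1 (aux_not_mem_support hpl l1)
  have hw' : (p'.concat h2).IsPath := tree_concat_isPath hp' h2 (aux_not_mem_support hpl' l2)
  have heq : p.concat h1 = p'.concat h2 := (ht.existsUnique_path r b).unique hw hw'
  have : (p.concat h1).reverse.getVert 1 = (p'.concat h2).reverse.getVert 1 := by rw [heq]
  rwa [reverse_concat, reverse_concat, getVert_cons_succ, getVert_cons_succ, getVert_zero, getVert_zero] at this

omit [DecidableEq V] in
private lemma tree_exists_parent (ht : G.IsTree) (hne : a ≠ r) :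
    ∃ b, G.Adj b a ∧ G.dist r b < G.dist r a := by
  obtain ⟨q, hq, hql⟩ := ht.isConnected.exists_path_of_dist a r
  have hpos : 0 < G.dist a r := ht.isConnected.pos_dist_of_ne hne
  cases q with
  | nil => simp at hql; simp at hpos
  | cons hadj q' =>
    rename_i x
    refine ⟨x, hadj.symm, ?_⟩
    have hx : G.dist r x ≤ q'.reverse.length := SimpleGraph.dist_le _
    rw [Walk.length_reverse] at hx
    have hl : G.dist a r = q'.length + 1 := by rw [← hql]; simp [Walk.length_cons]
    have hc : G.dist r a = G.dist a r := SimpleGraph.dist_comm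
    omega

private lemma amgm {t s x y : ℝ} (ht : 0 < t) (hts : t * s = 1) :
    2 * (x * y) ≤ t * x ^ 2 + s * y ^ 2 := by
  nlinarith [sq_nonneg (t * x - y), ht.le]

end helpers

/-- On a locally finite tree with potential `q' ≥ 0` satisfying
`d_T = deg + q' ≥ 2` pointwise: for every finitely supported normalized `φ`, with
`Q(φ) = (1/2) Σ_{v∼w} (φ(v)-φ(w))² + Σ_v q'(v)φ(v)²` and `D(φ) = Σ_v d_T(v)φ(v)²`,
one has `D - 2√(D-1) ≤ Q ≤ D + 2√(D-1)`. -/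
theorem tree_form_two_sided
    {V : Type*} (G : SimpleGraph V) [G.LocallyFinite] [DecidableRel G.Adj] (htree : G.IsTree)
    (q' : V → ℝ) (hq' : ∀ v, 0 ≤ q' v)
    (hd : ∀ v, 2 ≤ (G.degree v : ℝ) + q' v)
    (φ : V → ℝ) (hφ : (Function.support φ).Finite)
    (hnorm : ∑' v : V, φ v ^ 2 = 1)
    (Q D : ℝ)
    (hQ : Q = (1/2) * ∑' p : V × V,
          (if G.Adj p.1 p.2 then (φ p.1 - φ p.2) ^ 2 else 0)
        + ∑' v : V, q' v * φ v ^ 2)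
    (hD : D = ∑' v : V, ((G.degree v : ℝ) + q' v) * φ v ^ 2) :
    D - 2 * Real.sqrt (D - 1) ≤ Q ∧ Q ≤ D + 2 * Real.sqrt (D - 1) := by
  classical
  have hne : Nonempty V := htree.isConnected.nonempty
  set r : V := Classical.arbitrary V with hr
  set W : Finset V := hφ.toFinset with hW
  set F : Finset V := W ∪ W.biUnion (fun v => G.neighborFinset v) with hF
  have hφ0 : ∀ v ∉ W, φ v = 0 := by
    intro v hv
    by_contra h
    exact hv (hφ.mem_toFinset.mpr h)
  have hWF : W ⊆ F := Finset.subset_union_left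
  have hnbrF : ∀ v ∈ W, G.neighborFinset v ⊆ F := by
    intro v hv
    rw [hF]
    exact (Finset.subset_biUnion_of_mem (fun v => G.neighborFinset v) hv).trans Finset.subset_union_right
  have hmemF : ∀ x y : V, G.Adj x y → φ x ≠ 0 → x ∈ F ∧ y ∈ F := by
    intro x y hxy hx
    have hxW : x ∈ W := hφ.mem_toFinset.mpr hx
    exact ⟨hWF hxW, hnbrF x hxW (by rwa [SimpleGraph.mem_neighborFinset])⟩
  -- tsum conversions
  have hsq : ∑ v ∈ W, φ v ^ 2 = 1 := by
    rw [← hnorm]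
    exact (tsum_eq_sum fun v hv => by rw [hφ0 v hv]; ring).symm
  have hDsum : D = ∑ v ∈ W, ((G.degree v : ℝ) + q' v) * φ v ^ 2 :=
    hD.trans (tsum_eq_sum fun v hv => by rw [hφ0 v hv]; ring)
  have hqsum : ∑' v : V, q' v * φ v ^ 2 = ∑ v ∈ W, q' v * φ v ^ 2 :=
    tsum_eq_sum fun v hv => by rw [hφ0 v hv]; ring
  have hpairsum : ∑' p : V × V, (if G.Adj p.1 p.2 then (φ p.1 - φ p.2) ^ 2 else 0)
      = ∑ p ∈ F ×ˢ F, (if G.Adj p.1 p.2 then (φ p.1 - φ p.2) ^ 2 else 0) := by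
    refine tsum_eq_sum fun p hp => ?_
    split_ifs with hadj
    · by_cases h1 : φ p.1 = 0
      · by_cases h2 : φ p.2 = 0
        · rw [h1, h2]; ring
        · obtain ⟨hf2, hf1⟩ := hmemF p.2 p.1 hadj.symm h2
          exact absurd (Finset.mem_product.mpr ⟨hf1, hf2⟩) hp
      · obtain ⟨hf1, hf2⟩ := hmemF p.1 p.2 hadj h1
        exact absurd (Finset.mem_product.mpr ⟨hf1, hf2⟩) hp
    · rfl
  -- generic counting lemma
  have hcount : ∀ f : V → ℝ, (∀ v ∉ W, f v = 0) →
      ∑ p ∈ F ×ˢ F, (if G.Adj p.1 p.2 then f p.1 else 0)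
        = ∑ v ∈ W, (G.degree v : ℝ) * f v := by
    intro f hf
    rw [Finset.sum_product]
    have step1 : ∀ a ∈ F, (∑ b ∈ F, if G.Adj a b then f a else 0)
        = ((F.filter (G.Adj a)).card : ℝ) * f a := by
      intro a _
      rw [← Finset.sum_filter, Finset.sum_const, nsmul_eq_mul]
    rw [Finset.sum_congr rfl step1]
    rw [← Finset.sum_subset hWF (fun a _ ha => by rw [hf a ha, mul_zero])]
    refine Finset.sum_congr rfl fun a ha => ?_
    congr 2
    rw [← SimpleGraph.card_neighborFinset_eq_degree]
    congr 1
    ext b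
    simp only [Finset.mem_filter, SimpleGraph.mem_neighborFinset]
    exact ⟨fun h => h.2, fun h => ⟨hnbrF a ha (by rwa [SimpleGraph.mem_neighborFinset]), h⟩⟩
  have hswap : ∀ g : V → V → ℝ,
      ∑ p ∈ F ×ˢ F, g p.1 p.2 = ∑ p ∈ F ×ˢ F, g p.2 p.1 := by
    intro g
    rw [Finset.sum_product, Finset.sum_product]
    exact Finset.sum_comm
  -- expansion: Q = D - S
  set S : ℝ := ∑ p ∈ F ×ˢ F, (if G.Adj p.1 p.2 then φ p.1 * φ p.2 else 0) with hS
  have hQD : Q = D - S := by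
    have hexp : ∑ p ∈ F ×ˢ F, (if G.Adj p.1 p.2 then (φ p.1 - φ p.2) ^ 2 else 0)
        = ∑ p ∈ F ×ˢ F, ((if G.Adj p.1 p.2 then φ p.1 ^ 2 else 0)
          + (if G.Adj p.1 p.2 then φ p.2 ^ 2 else 0)
          - 2 * (if G.Adj p.1 p.2 then φ p.1 * φ p.2 else 0)) :=
      Finset.sum_congr rfl fun p _ => by split_ifs <;> ring
    have h1 : ∑ p ∈ F ×ˢ F, (if G.Adj p.1 p.2 then φ p.1 ^ 2 else 0)
        = ∑ v ∈ W, (G.degree v : ℝ) * φ v ^ 2 := by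
      simpa using hcount (fun v => φ v ^ 2) (fun v hv => by simp [hφ0 v hv])
    have h2 : ∑ p ∈ F ×ˢ F, (if G.Adj p.1 p.2 then φ p.2 ^ 2 else 0)
        = ∑ v ∈ W, (G.degree v : ℝ) * φ v ^ 2 := by
      rw [hswap (fun a b => if G.Adj a b then φ b ^ 2 else 0)]
      rw [show (∑ p ∈ F ×ˢ F, if G.Adj p.2 p.1 then φ p.1 ^ 2 else 0)
          = ∑ p ∈ F ×ˢ F, (if G.Adj p.1 p.2 then φ p.1 ^ 2 else 0) from
        Finset.sum_congr rfl fun p _ => if_congr (G.adj_comm p.2 p.1) rfl rfl]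
      exact h1
    rw [hQ, hpairsum, hqsum, hexp, Finset.sum_sub_distrib, Finset.sum_add_distrib,
      h1, h2, ← Finset.mul_sum, ← hS, hDsum, Finset.sum_congr rfl
        (fun v _ => (add_mul (G.degree v : ℝ) (q' v) (φ v ^ 2))), Finset.sum_add_distrib]
    ring
  -- basic bounds on D
  have hD2 : 2 ≤ D := by
    rw [hDsum]
    calc (2:ℝ) = ∑ v ∈ W, 2 * φ v ^ 2 := by rw [← Finset.mul_sum, hsq, mul_one]
    _ ≤ _ := Finset.sum_le_sum fun v _ =>
        mul_le_mul_of_nonneg_right (hd v) (sq_nonneg _)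
  set s : ℝ := Real.sqrt (D - 1) with hs
  have hs1 : 1 ≤ s := by
    rw [hs]
    nlinarith [Real.sq_sqrt (by linarith : (0:ℝ) ≤ D - 1), Real.sqrt_nonneg (D - 1)]
  have hs0 : (0:ℝ) < s := lt_of_lt_of_le one_pos hs1
  have hss : s * s = D - 1 := Real.mul_self_sqrt (by linarith)
  set t : ℝ := s⁻¹ with htdef
  have ht0 : (0:ℝ) < t := inv_pos.mpr hs0
  have hts : t * s = 1 := inv_mul_cancel₀ hs0.ne'
  have ht1 : t ≤ 1 := by nlinarith [mul_nonneg ht0.le (by linarith : (0:ℝ) ≤ s - 1)]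
  -- the key estimate |S| ≤ 2s
  suffices habs : |S| ≤ 2 * s by
    obtain ⟨hl, hr2⟩ := abs_le.mp habs
    rw [hQD]
    exact ⟨by linarith, by linarith⟩
  -- core estimate
  set ψ : V → ℝ := fun v => |φ v| with hψ
  have hψ0 : ∀ v ∉ W, ψ v = 0 := fun v hv => by rw [hψ]; simp [hφ0 v hv]
  have hψsq : ∀ v, ψ v ^ 2 = φ v ^ 2 := fun v => by rw [hψ]; exact sq_abs _
  have habs1 : |S| ≤ ∑ p ∈ F ×ˢ F, (if G.Adj p.1 p.2 then ψ p.1 * ψ p.2 else 0) := by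
    refine (Finset.abs_sum_le_sum_abs _ _).trans (le_of_eq (Finset.sum_congr rfl fun p _ => ?_))
    rw [hψ]
    split_ifs
    · exact abs_mul _ _
    · exact abs_zero
  set P : V → V → Prop := fun a b => G.Adj a b ∧ G.dist r a < G.dist r b with hP
  set g : V → V → ℝ := fun a b => if P a b then t * ψ a ^ 2 + s * ψ b ^ 2 else 0 with hg
  have hg0 : ∀ a b, 0 ≤ g a b := by
    intro a b
    rw [hg]
    dsimp only
    split_ifs
    · exact add_nonneg (mul_nonneg ht0.le (sq_nonneg _)) (mul_nonneg hs0.le (sq_nonneg _))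
    · exact le_refl 0
  have hstep1 : ∀ p ∈ F ×ˢ F, (if G.Adj p.1 p.2 then ψ p.1 * ψ p.2 else 0)
      ≤ (1/2) * (g p.1 p.2 + g p.2 p.1) := by
    rintro ⟨a, b⟩ _
    dsimp only
    by_cases hadj : G.Adj a b
    · rw [if_pos hadj]
      rcases (tree_dist_ne (r := r) htree hadj).lt_or_gt with hlt | hlt
      · have hgab : g a b = t * ψ a ^ 2 + s * ψ b ^ 2 := by
          rw [hg]; exact if_pos ⟨hadj, hlt⟩
        have hgba : g b a = 0 := by
          rw [hg]; exact if_neg (fun h => absurd h.2 (not_lt.mpr hlt.le))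
        have hA := amgm (x := ψ a) (y := ψ b) ht0 hts
        rw [hgab, hgba]; linarith
      · have hgba : g b a = t * ψ b ^ 2 + s * ψ a ^ 2 := by
          rw [hg]; exact if_pos ⟨hadj.symm, hlt⟩
        have hgab : g a b = 0 := by
          rw [hg]; exact if_neg (fun h => absurd h.2 (not_lt.mpr hlt.le))
        have hA := amgm (x := ψ b) (y := ψ a) ht0 hts
        have hcomm : ψ a * ψ b = ψ b * ψ a := mul_comm _ _
        rw [hgab, hgba]; linarith
    · rw [if_neg hadj]
      have h1 := hg0 a b
      have h2 := hg0 b a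
      linarith
  have hsum1 : ∑ p ∈ F ×ˢ F, (if G.Adj p.1 p.2 then ψ p.1 * ψ p.2 else 0)
      ≤ ∑ p ∈ F ×ˢ F, g p.1 p.2 := by
    refine (Finset.sum_le_sum hstep1).trans (le_of_eq ?_)
    rw [← Finset.mul_sum, Finset.sum_add_distrib, ← hswap g]
    ring
  set ca : V → ℕ := fun a => (F.filter (fun b => P a b)).card with hca
  set pc : V → ℕ := fun b => (F.filter (fun a => P a b)).card with hpc
  have hsumA : ∑ p ∈ F ×ˢ F, (if P p.1 p.2 then t * ψ p.1 ^ 2 else 0)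
      = ∑ a ∈ F, (ca a : ℝ) * (t * ψ a ^ 2) := by
    rw [Finset.sum_product]
    refine Finset.sum_congr rfl fun a _ => ?_
    simp only
    rw [← Finset.sum_filter, Finset.sum_const, nsmul_eq_mul, hca]
  have hsumB : ∑ p ∈ F ×ˢ F, (if P p.1 p.2 then s * ψ p.2 ^ 2 else 0)
      = ∑ b ∈ F, (pc b : ℝ) * (s * ψ b ^ 2) := by
    rw [Finset.sum_product, Finset.sum_comm]
    refine Finset.sum_congr rfl fun b _ => ?_
    simp only
    rw [← Finset.sum_filter, Finset.sum_const, nsmul_eq_mul, hpc]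
  have hsum2 : ∑ p ∈ F ×ˢ F, g p.1 p.2
      = ∑ a ∈ F, ((ca a : ℝ) * (t * ψ a ^ 2) + (pc a : ℝ) * (s * ψ a ^ 2)) := by
    rw [Finset.sum_add_distrib, ← hsumA, ← hsumB, ← Finset.sum_add_distrib]
    refine Finset.sum_congr rfl fun p _ => ?_
    rw [hg]
    dsimp only
    split_ifs <;> ring
  have hpc1 : ∀ b, pc b ≤ 1 := by
    intro b
    rw [hpc]
    refine Finset.card_le_one.mpr fun x hx y hy => ?_
    rw [Finset.mem_filter, hP] at hx hy
    exact tree_parent_unique htree hx.2.1 hy.2.1 hx.2.2 hy.2.2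
  have hcadeg : ∀ a, ca a ≤ G.degree a := by
    intro a
    rw [hca, ← SimpleGraph.card_neighborFinset_eq_degree]
    refine Finset.card_le_card fun b hb => ?_
    rw [Finset.mem_filter, hP] at hb
    rw [SimpleGraph.mem_neighborFinset]
    exact hb.2.1
  have hcoef : ∀ a ∈ F, (ca a : ℝ) * (t * ψ a ^ 2) + (pc a : ℝ) * (s * ψ a ^ 2)
      ≤ (t * ((G.degree a : ℝ) - 1) + s) * ψ a ^ 2 := by
    intro a _
    have hsq0 : (0:ℝ) ≤ ψ a ^ 2 := sq_nonneg _
    by_cases har : a = r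
    · have hpc0 : pc a = 0 := by
        rw [hpc, Finset.card_eq_zero, Finset.filter_eq_empty_iff]
        intro x _ hx
        rw [hP] at hx
        rw [har] at hx
        have hx2 := hx.2
        rw [SimpleGraph.dist_self] at hx2
        exact Nat.not_lt_zero _ hx2
      have h1 : (ca a : ℝ) ≤ (G.degree a : ℝ) := Nat.cast_le.mpr (hcadeg a)
      rw [hpc0]
      push_cast
      have e1 : (ca a : ℝ) * (t * ψ a ^ 2) ≤ (G.degree a : ℝ) * (t * ψ a ^ 2) :=
        mul_le_mul_of_nonneg_right h1 (mul_nonneg ht0.le hsq0)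
      have e2 : t * ψ a ^ 2 ≤ s * ψ a ^ 2 := mul_le_mul_of_nonneg_right (ht1.trans hs1) hsq0
      have e3 : (t * ((G.degree a : ℝ) - 1) + s) * ψ a ^ 2
          = (G.degree a : ℝ) * (t * ψ a ^ 2) - t * ψ a ^ 2 + s * ψ a ^ 2 := by ring
      linarith
    · obtain ⟨b0, hb0adj, hb0lt⟩ := tree_exists_parent htree har
      have hb0mem : b0 ∈ G.neighborFinset a := by
        rw [SimpleGraph.mem_neighborFinset]; exact hb0adj.symm
      have hca1 : ca a + 1 ≤ G.degree a := by
        have hsub : F.filter (fun b => P a b) ⊆ (G.neighborFinset a).erase b0 := by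
          intro x hx
          rw [Finset.mem_filter, hP] at hx
          rw [Finset.mem_erase, SimpleGraph.mem_neighborFinset]
          refine ⟨fun h => ?_, hx.2.1⟩
          rw [h] at hx
          omega
        have hcc := Finset.card_le_card hsub
        rw [Finset.card_erase_of_mem hb0mem,
          SimpleGraph.card_neighborFinset_eq_degree] at hcc
        have hdeg1 : 1 ≤ G.degree a := by
          rw [← SimpleGraph.card_neighborFinset_eq_degree]
          exact Finset.card_pos.mpr ⟨b0, hb0mem⟩
        show (F.filter (fun b => P a b)).card + 1 ≤ G.degree a
        omega
      have h1 : (ca a : ℝ) + 1 ≤ (G.degree a : ℝ) := by exact_mod_cast hca1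
      have h2 : (pc a : ℝ) ≤ 1 := by exact_mod_cast hpc1 a
      have e1 : (ca a : ℝ) * (t * ψ a ^ 2) ≤ ((G.degree a : ℝ) - 1) * (t * ψ a ^ 2) :=
        mul_le_mul_of_nonneg_right (by linarith) (mul_nonneg ht0.le hsq0)
      have e2 : (pc a : ℝ) * (s * ψ a ^ 2) ≤ 1 * (s * ψ a ^ 2) :=
        mul_le_mul_of_nonneg_right h2 (mul_nonneg hs0.le hsq0)
      have e3 : (t * ((G.degree a : ℝ) - 1) + s) * ψ a ^ 2
          = ((G.degree a : ℝ) - 1) * (t * ψ a ^ 2) + 1 * (s * ψ a ^ 2) := by ring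
      linarith
  have hsum3 : ∑ a ∈ F, (t * ((G.degree a : ℝ) - 1) + s) * ψ a ^ 2
      = ∑ a ∈ W, (t * ((G.degree a : ℝ) - 1) + s) * φ a ^ 2 := by
    rw [← Finset.sum_subset hWF (fun a _ ha => by rw [hψ0 a ha]; ring)]
    exact Finset.sum_congr rfl fun a _ => by rw [hψsq]
  have hfinal : ∑ a ∈ W, (t * ((G.degree a : ℝ) - 1) + s) * φ a ^ 2 ≤ 2 * s := by
    have hexp2 : ∑ a ∈ W, (t * ((G.degree a : ℝ) - 1) + s) * φ a ^ 2
        = t * (∑ a ∈ W, (G.degree a : ℝ) * φ a ^ 2) + (s - t) * (∑ a ∈ W, φ a ^ 2) := by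
      rw [Finset.mul_sum, Finset.mul_sum, ← Finset.sum_add_distrib]
      exact Finset.sum_congr rfl fun a _ => by ring
    have hdle : ∑ a ∈ W, (G.degree a : ℝ) * φ a ^ 2 ≤ D := by
      rw [hDsum]
      refine Finset.sum_le_sum fun a _ => ?_
      nlinarith [sq_nonneg (φ a), hq' a]
    rw [hexp2, hsq, mul_one]
    have hmul : t * (∑ a ∈ W, (G.degree a : ℝ) * φ a ^ 2) ≤ t * D :=
      mul_le_mul_of_nonneg_left hdle ht0.le
    have hts2 : t * (D - 1) = s := by
      rw [← hss, ← mul_assoc, hts, one_mul]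
    linarith
  calc |S| ≤ ∑ p ∈ F ×ˢ F, (if G.Adj p.1 p.2 then ψ p.1 * ψ p.2 else 0) := habs1
    _ ≤ ∑ p ∈ F ×ˢ F, g p.1 p.2 := hsum1
    _ = ∑ a ∈ F, ((ca a : ℝ) * (t * ψ a ^ 2) + (pc a : ℝ) * (s * ψ a ^ 2)) := hsum2
    _ ≤ ∑ a ∈ F, (t * ((G.degree a : ℝ) - 1) + s) * ψ a ^ 2 := Finset.sum_le_sum hcoef
    _ = ∑ a ∈ W, (t * ((G.degree a : ℝ) - 1) + s) * φ a ^ 2 := hsum3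
    _ ≤ 2 * s := hfinal
end

section
/- In the setting of the min-max comparison theorem, if moreover lim_{r→∞} f₁(r) = lim_{r→∞} f₂(r) = ∞, then A₁ has purely discrete spectrum (empty essential spectrum) if and only if A₂ has purely discrete spectrum. -/
open Filter

/-- The `n`-th min-max value of a quadratic form `Q` with form core `D₀`. -/
noncomputable def minmaxValue {H : Type*} [NormedAddCommGroup H]
    [InnerProductSpace ℝ H] (D₀ : Submodule ℝ H) (Q : H → ℝ) (n : ℕ) : ℝ :=
  ⨆ Φ : Fin n → H,
    ⨅ ψ : {ψ : H // ψ ∈ D₀ ∧ ‖ψ‖ = 1 ∧ ∀ i, (inner ℝ (Φ i) ψ : ℝ) = 0},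
      Q (ψ : H)

/-!
If `Q₁ ≥ f₁ ∘ Q₂` with `f₁ → ∞`, then `Q₁` is large on unit vectors where `Q₂` is large; if
`Q₁ ≤ f₂ ∘ Q₂` with `f₂` monotone, then `Q₂` is large where `Q₁` is large. Such a two-sided
control passes through the infima over unit vectors orthogonal to `n` given vectors, hence through
the min-max values, so the two sequences of min-max values tend to infinity together. Both
directions of the control are needed even for one implication: the reverse one keeps the family
of infima bounded above, since an unbounded `⨆` in `ℝ` is the junk value `0`.
-/

section Comparison

variable {α : Type*} {f g : α → ℝ} {s : Set α}

theorem tendsto_comap_inf_principal_of_comp_le {φ : ℝ → ℝ} (hφ : Tendsto φ atTop atTop)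
    (h : ∀ x ∈ s, φ (g x) ≤ f x) : Tendsto f (comap g atTop ⊓ 𝓟 s) atTop :=
  tendsto_atTop_mono' _ (mem_inf_of_right (mem_principal.2 h))
    ((hφ.comp tendsto_comap).mono_left inf_le_left)

theorem tendsto_comap_inf_principal_of_le_comp {φ : ℝ → ℝ} {a : ℝ}
    (hφ : MonotoneOn φ (Set.Ici a)) (hg : ∀ x ∈ s, a ≤ g x) (h : ∀ x ∈ s, f x ≤ φ (g x)) :
    Tendsto g (comap f atTop ⊓ 𝓟 s) atTop := by
  refine tendsto_atTop.2 fun T => ?_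
  have hf_large : ∀ᶠ x in comap f atTop, φ (max T a) < f x :=
    tendsto_comap.eventually (eventually_gt_atTop _)
  filter_upwards [mem_inf_of_left hf_large, mem_inf_of_right (mem_principal_self s)]
    with x hfx hx
  by_contra! hgT
  have : φ (g x) ≤ φ (max T a) :=
    hφ (hg x hx) (le_max_right T a) (hgT.le.trans (le_max_left T a))
  linarith [h x hx]

theorem exists_forall_le_of_tendsto_comap_inf_principal
    (h : Tendsto f (comap g atTop ⊓ 𝓟 s) atTop) (T M₀ : ℝ) :
    ∃ M, M₀ ≤ M ∧ ∀ x ∈ s, M ≤ g x → T ≤ f x := by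
  have hT := tendsto_atTop.1 h T
  rw [eventually_inf_principal, (atTop_basis.comap g).eventually_iff] at hT
  obtain ⟨M, -, hM⟩ := hT
  exact ⟨max M M₀, le_max_right _ _,
    fun x hx hgx => hM (le_trans (le_max_left _ _) hgx : M ≤ g x) hx⟩

end Comparison

section MinMax

variable {H : Type*} [NormedAddCommGroup H] [InnerProductSpace ℝ H] {D₀ : Submodule ℝ H}
  {Q Qa Qb : H → ℝ} {n : ℕ}

noncomputable def minmaxInf (D₀ : Submodule ℝ H) (Q : H → ℝ) (Φ : Fin n → H) : ℝ :=
  ⨅ ψ : {ψ : H // ψ ∈ D₀ ∧ ‖ψ‖ = 1 ∧ ∀ i, (inner ℝ (Φ i) ψ : ℝ) = 0}, Q (ψ : H)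

theorem minmaxValue_eq_iSup_minmaxInf : minmaxValue D₀ Q n = ⨆ Φ : Fin n → H, minmaxInf D₀ Q Φ :=
  rfl

/-- `0 ≤ M < minmaxInf D₀ Qb Φ` rules out the junk value `0` of an empty infimum. -/
theorem le_minmaxInf_of_lt_minmaxInf (hQb : ∀ φ ∈ D₀, 0 ≤ Qb φ) {T M : ℝ} (hM : 0 ≤ M)
    (hab : ∀ ψ ∈ (D₀ : Set H) ∩ Metric.sphere 0 1, M ≤ Qb ψ → T ≤ Qa ψ) {Φ : Fin n → H}
    (hΦ : M < minmaxInf D₀ Qb Φ) : T ≤ minmaxInf D₀ Qa Φ := by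
  have : Nonempty {ψ : H // ψ ∈ D₀ ∧ ‖ψ‖ = 1 ∧ ∀ i, (inner ℝ (Φ i) ψ : ℝ) = 0} := by
    by_contra! hempty
    rw [minmaxInf, Real.iInf_of_isEmpty] at hΦ
    linarith
  refine le_ciInf fun ψ => hab ψ ⟨ψ.2.1, mem_sphere_zero_iff_norm.2 ψ.2.2.1⟩ (hΦ.le.trans ?_)
  exact ciInf_le ⟨0, by rintro _ ⟨ψ', rfl⟩; exact hQb _ ψ'.2.1⟩ ψ

theorem bddAbove_range_minmaxInf_of_pos (h : 0 < minmaxValue D₀ Q n) :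
    BddAbove (Set.range (minmaxInf (n := n) D₀ Q)) := by
  by_contra hunbdd
  rw [minmaxValue_eq_iSup_minmaxInf, Real.iSup_of_not_bddAbove hunbdd] at h
  exact lt_irrefl 0 h

theorem bddAbove_range_minmaxInf_of_tendsto (hQa : ∀ φ ∈ D₀, 0 ≤ Qa φ)
    (hba : Tendsto Qb (comap Qa atTop ⊓ 𝓟 ((D₀ : Set H) ∩ Metric.sphere 0 1)) atTop)
    (hb : BddAbove (Set.range (minmaxInf (n := n) D₀ Qb))) :
    BddAbove (Set.range (minmaxInf (n := n) D₀ Qa)) := by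
  obtain ⟨C, hC⟩ := hb
  obtain ⟨M, hM, hMC⟩ := exists_forall_le_of_tendsto_comap_inf_principal hba (C + 1) 0
  refine ⟨M, ?_⟩
  rintro _ ⟨Φ, rfl⟩
  by_contra! hΦ
  have := hC (Set.mem_range_self Φ)
  linarith [le_minmaxInf_of_lt_minmaxInf hQa hM hMC hΦ]

theorem tendsto_minmaxValue_of_tendsto_comap (hQa : ∀ φ ∈ D₀, 0 ≤ Qa φ)
    (hQb : ∀ φ ∈ D₀, 0 ≤ Qb φ)
    (hab : Tendsto Qa (comap Qb atTop ⊓ 𝓟 ((D₀ : Set H) ∩ Metric.sphere 0 1)) atTop)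
    (hba : Tendsto Qb (comap Qa atTop ⊓ 𝓟 ((D₀ : Set H) ∩ Metric.sphere 0 1)) atTop)
    (h : Tendsto (fun n => minmaxValue D₀ Qb n) atTop atTop) :
    Tendsto (fun n => minmaxValue D₀ Qa n) atTop atTop := by
  refine tendsto_atTop.2 fun T => ?_
  obtain ⟨M, hM, hMT⟩ := exists_forall_le_of_tendsto_comap_inf_principal hab T 0
  filter_upwards [h.eventually_gt_atTop M] with n hn
  obtain ⟨Φ, hΦ⟩ := exists_lt_of_lt_ciSup hn
  have hbdd := bddAbove_range_minmaxInf_of_tendsto hQa hba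
    (bddAbove_range_minmaxInf_of_pos (hM.trans_lt hn))
  exact (le_minmaxInf_of_lt_minmaxInf hQb hM hMT hΦ).trans (le_ciSup hbdd Φ)

end MinMax

theorem minmax_discrete_iff_general
    {H : Type*} [NormedAddCommGroup H] [InnerProductSpace ℝ H]
    (D₀ : Submodule ℝ H) (Q₁ Q₂ : H → ℝ)
    (hQ₁ : ∀ φ ∈ D₀, 0 ≤ Q₁ φ) (hQ₂ : ∀ φ ∈ D₀, 0 ≤ Q₂ φ)
    (f₁ f₂ : ℝ → ℝ)
    (hf₂m : MonotoneOn f₂ (Set.Ici 0))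
    (hf₁ : Tendsto f₁ atTop atTop)
    (hcomp : ∀ φ ∈ D₀, ‖φ‖ = 1 → f₁ (Q₂ φ) ≤ Q₁ φ ∧ Q₁ φ ≤ f₂ (Q₂ φ)) :
    Tendsto (fun n => minmaxValue D₀ Q₁ n) atTop atTop ↔
      Tendsto (fun n => minmaxValue D₀ Q₂ n) atTop atTop := by
  have hcomp' : ∀ φ ∈ (D₀ : Set H) ∩ Metric.sphere 0 1,
      f₁ (Q₂ φ) ≤ Q₁ φ ∧ Q₁ φ ≤ f₂ (Q₂ φ) :=
    fun φ hφ => hcomp φ hφ.1 (mem_sphere_zero_iff_norm.1 hφ.2)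
  have h₁₂ := tendsto_comap_inf_principal_of_comp_le hf₁ fun φ hφ => (hcomp' φ hφ).1
  have h₂₁ := tendsto_comap_inf_principal_of_le_comp hf₂m (fun φ hφ => hQ₂ φ hφ.1)
    fun φ hφ => (hcomp' φ hφ).2
  exact ⟨tendsto_minmaxValue_of_tendsto_comap hQ₂ hQ₁ h₂₁ h₁₂,
    tendsto_minmaxValue_of_tendsto_comap hQ₁ hQ₂ h₁₂ h₂₁⟩

/-- In the min-max comparison setting, if moreover
`f₁(r) → ∞` and `f₂(r) → ∞` as `r → ∞`, then `A₁` has purely discrete spectrum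
iff `A₂` does; purely discrete spectrum is equivalent to `λ_n(A) → ∞`,
expressed here via the min-max values. -/
theorem minmax_discrete_iff
    {H : Type*} [NormedAddCommGroup H] [InnerProductSpace ℝ H] [CompleteSpace H]
    (D₀ : Submodule ℝ H) (Q₁ Q₂ : H → ℝ)
    (hQ₁ : ∀ φ ∈ D₀, 0 ≤ Q₁ φ) (hQ₂ : ∀ φ ∈ D₀, 0 ≤ Q₂ φ)
    (f₁ f₂ : ℝ → ℝ)
    (hf₁c : ContinuousOn f₁ (Set.Ici 0)) (hf₂c : ContinuousOn f₂ (Set.Ici 0))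
    (hf₁m : MonotoneOn f₁ (Set.Ici 0)) (hf₂m : MonotoneOn f₂ (Set.Ici 0))
    (hf₁ : Tendsto f₁ atTop atTop) (hf₂ : Tendsto f₂ atTop atTop)
    (hcomp : ∀ φ ∈ D₀, ‖φ‖ = 1 → f₁ (Q₂ φ) ≤ Q₁ φ ∧ Q₁ φ ≤ f₂ (Q₂ φ)) :
    Tendsto (fun n => minmaxValue D₀ Q₁ n) atTop atTop ↔
      Tendsto (fun n => minmaxValue D₀ Q₂ n) atTop atTop :=
  minmax_discrete_iff_general D₀ Q₁ Q₂ hQ₁ hQ₂ f₁ f₂ hf₂m hf₁ hcomp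
end

section
/- Let G = (V,E) be a locally finite connected graph with root o, and suppose there exist constants C ≥ 0 and, for each ε ∈ (0,1), the Dirichlet form satisfies Q(φ) ≥ ⟨((1-ε)deg - C_ε)φ, φ⟩ for finitely supported φ (with C_ε = 1/ε + C), suppose deg(v) → ∞ as v leaves finite sets, and deg₋ is bounded. Then any ℓ²-eigenfunction u of the Laplacian Δ = deg - adjacency with Δu = λu satisfies Σ_v deg(v) α^{2 d(o,v)} u(v)² < ∞ for every 0 < α < 1 + √2. -/
section
variable {V : Type*} {G : SimpleGraph V} {o : V} {α : ℝ} {N : ℕ} {v w : V}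

noncomputable def agmonCut (G : SimpleGraph V) (o : V) (α : ℝ) (N : ℕ) (v : V) : ℝ :=
  if G.dist o v ≤ 2*N then α ^ (min (G.dist o v) (2*N - G.dist o v)) else 0

lemma agmonCut_nonneg (hα : 0 < α) : 0 ≤ agmonCut G o α N v := by
  unfold agmonCut; split <;> positivity

lemma agmonCut_le (hα1 : 1 ≤ α) : agmonCut G o α N v ≤ α ^ (G.dist o v) := by
  unfold agmonCut; split
  · exact pow_le_pow_right₀ hα1 (min_le_left _ _)
  · positivity

lemma agmonCut_eq_zero (h : ¬ G.dist o v ≤ 2*N) : agmonCut G o α N v = 0 := by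
  unfold agmonCut; rw [if_neg h]

lemma agmonCut_eq_one (h : G.dist o v = 2*N) : agmonCut G o α N v = 1 := by
  unfold agmonCut
  rw [if_pos (le_of_eq h)]
  have : min (G.dist o v) (2*N - G.dist o v) = 0 := by omega
  rw [this, pow_zero]

lemma agmonCut_eq_pow (h : G.dist o v ≤ N) : agmonCut G o α N v = α ^ (G.dist o v) := by
  unfold agmonCut
  rw [if_pos (by omega)]
  congr 1
  omega

lemma agmonCut_sq_le (hα1 : 1 ≤ α) : (agmonCut G o α N v)^2 ≤ α ^ (2 * G.dist o v) := by
  have h0 : (0:ℝ) < α := lt_of_lt_of_le one_pos hα1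
  have := agmonCut_le (G := G) (o := o) (N := N) (v := v) hα1
  calc (agmonCut G o α N v)^2 ≤ (α ^ (G.dist o v))^2 :=
        pow_le_pow_left₀ (agmonCut_nonneg h0) this 2
    _ = α ^ (2 * G.dist o v) := by rw [← pow_mul, mul_comm]

lemma agmon_pow_ratio' {α : ℝ} (hα : 1 ≤ α) {a b : ℕ} (h1 : a ≤ b + 1) (h2 : b ≤ a + 1) :
    (α ^ a - α ^ b) ^ 2 ≤ (α - 1) ^ 2 / α * (α ^ a * α ^ b) := by
  have hα0 : (0:ℝ) < α := lt_of_lt_of_le one_pos hα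
  rcases Nat.lt_trichotomy a b with h | h | h
  · have hb : b = a + 1 := by omega
    subst hb; apply le_of_eq; field_simp; ring
  · subst h
    simp only [sub_self, ne_eq, zero_pow, OfNat.ofNat_ne_zero, not_false_eq_true]
    positivity
  · have hb : a = b + 1 := by omega
    subst hb; apply le_of_eq; field_simp; ring

lemma agmon_dist_adj (hconn : G.Connected) (h : G.Adj v w) :
    G.dist o w ≤ G.dist o v + 1 := by
  have h1 : G.dist v w = 1 := SimpleGraph.dist_eq_one_iff_adj.mpr h
  calc G.dist o w ≤ G.dist o v + G.dist v w := hconn.dist_triangle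
  _ = G.dist o v + 1 := by rw [h1]

lemma agmonCut_ratio (hconn : G.Connected) (hα1 : 1 ≤ α) (h : G.Adj v w)
    (hv : G.dist o v ≤ 2*N) (hw : G.dist o w ≤ 2*N) :
    (agmonCut G o α N v - agmonCut G o α N w)^2
      ≤ (α-1)^2/α * (agmonCut G o α N v * agmonCut G o α N w) := by
  have d1 := agmon_dist_adj (o := o) hconn h
  have d2 := agmon_dist_adj (o := o) hconn h.symm
  unfold agmonCut
  rw [if_pos hv, if_pos hw]
  exact agmon_pow_ratio' hα1 (by omega) (by omega)

lemma agmonCut_step (hconn : G.Connected) (hα1 : 1 ≤ α) (h : G.Adj v w)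
    (hv : G.dist o v ≤ 2*N) :
    agmonCut G o α N w ≤ α * agmonCut G o α N v := by
  have hα0 : (0:ℝ) < α := lt_of_lt_of_le one_pos hα1
  have d1 := agmon_dist_adj (o := o) hconn h
  have d2 := agmon_dist_adj (o := o) hconn h.symm
  by_cases hw : G.dist o w ≤ 2*N
  · unfold agmonCut
    rw [if_pos hv, if_pos hw]
    calc α ^ (min (G.dist o w) (2*N - G.dist o w))
        ≤ α ^ (min (G.dist o v) (2*N - G.dist o v) + 1) := pow_le_pow_right₀ hα1 (by omega)
      _ = α * α ^ (min (G.dist o v) (2*N - G.dist o v)) := by ring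
  · rw [agmonCut_eq_zero hw]
    have := agmonCut_nonneg (G := G) (o := o) (N := N) (v := v) hα0
    positivity

end

lemma agmon_ball_finite {V : Type*} (G : SimpleGraph V) [G.LocallyFinite]
    (hconn : G.Connected) (o : V) : ∀ n : ℕ, {v : V | G.dist o v ≤ n}.Finite := by
  intro n
  induction n with
  | zero =>
    apply Set.Finite.subset (Set.finite_singleton o)
    intro v hv
    simp only [Set.mem_setOf_eq, Nat.le_zero] at hv
    have := (hconn.dist_eq_zero_iff (u := o) (v := v)).mp hv
    simp [this.symm]
  | succ n ih =>
    have : {v : V | G.dist o v ≤ n + 1} ⊆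
        {v : V | G.dist o v ≤ n} ∪ ⋃ w ∈ {v : V | G.dist o v ≤ n}, G.neighborSet w := by
      intro v hv
      simp only [Set.mem_setOf_eq] at hv
      rcases Nat.lt_or_ge (G.dist o v) (n+1) with h | h
      · exact Or.inl (Nat.lt_succ_iff.mp h)
      · have hd : G.dist o v = n + 1 := le_antisymm hv h
        obtain ⟨p, hp⟩ := (hconn o v).exists_walk_length_eq_dist
        have hq : (p.reverse).length = n + 1 := by rw [SimpleGraph.Walk.length_reverse, hp, hd]
        have hnil : ¬ (p.reverse).Nil := by
          rw [SimpleGraph.Walk.not_nil_iff_lt_length, hq]; omega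
        refine Or.inr ?_
        refine Set.mem_biUnion (?_ : p.reverse.getVert 1 ∈ {v : V | G.dist o v ≤ n}) ?_
        · have htl := SimpleGraph.Walk.length_tail_add_one hnil
          have : G.dist (p.reverse.getVert 1) o ≤ (p.reverse.tail).length :=
            SimpleGraph.dist_le _
          simp only [Set.mem_setOf_eq]
          rw [SimpleGraph.dist_comm]
          omega
        · exact (SimpleGraph.Walk.adj_snd hnil).symm
    refine Set.Finite.subset ?_ this
    exact ih.union (Set.Finite.biUnion ih (fun w _ => (G.neighborSet w).toFinite))

lemma agmon_amgm {e a b : ℝ} (he : 0 < e) : a*b ≤ e/2*a^2 + 1/(2*e)*b^2 := by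
  have h2 : (0:ℝ) < 2*e := by linarith
  have key : 2*e*(a*b) ≤ 2*e*(e/2*a^2 + 1/(2*e)*b^2) := by
    have h3 : 2*e*(e/2*a^2 + 1/(2*e)*b^2) = e^2*a^2 + b^2 := by
      field_simp
    rw [h3]
    nlinarith [sq_nonneg (e*a - b)]
  exact le_of_mul_le_mul_left key h2

set_option maxHeartbeats 2000000 in
lemma agmon_main
    {V : Type*} [DecidableEq V] (G : SimpleGraph V) [G.LocallyFinite] [DecidableRel G.Adj]
    (hconn : G.Connected) (o : V) (C : ℝ) (hC : 0 ≤ C)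
    (hform : ∀ ε : ℝ, 0 < ε → ε < 1 → ∀ φ : V → ℝ,
      (Function.support φ).Finite →
      ∑' v : V, ((1 - ε) * (G.degree v : ℝ) - (1 / ε + C)) * φ v ^ 2
        ≤ (1/2) * ∑' p : V × V,
            (if G.Adj p.1 p.2 then (φ p.1 - φ p.2) ^ 2 else 0))
    (hdeginf : ∀ M : ℝ, ∃ K : Finset V, ∀ v ∉ K, M ≤ (G.degree v : ℝ))
    (hdegm : ∃ D : ℕ, ∀ v : V,
      ((G.neighborFinset v).filter (fun w => G.dist o w + 1 = G.dist o v)).card ≤ D)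
    (u : V → ℝ) (lam : ℝ)
    (hu : Summable (fun v => u v ^ 2))
    (heig : ∀ v, ∑ w ∈ G.neighborFinset v, (u v - u w) = lam * u v)
    (α : ℝ) (hα1 : 1 ≤ α) (hα : α < 1 + Real.sqrt 2) :
    Summable (fun v => (G.degree v : ℝ) * α ^ (2 * G.dist o v) * u v ^ 2) := by
  classical
  obtain ⟨D, hD⟩ := hdegm
  have hα0 : (0:ℝ) < α := lt_of_lt_of_le one_pos hα1
  have hsq2 : (α - 1)^2 < 2 := by
    have h2 : Real.sqrt 2 ^ 2 = 2 := Real.sq_sqrt (by norm_num)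
    nlinarith [Real.sqrt_nonneg 2]
  set ε : ℝ := (2 - (α-1)^2)/4 with hεdef
  have hε0 : 0 < ε := by simp only [hεdef]; linarith
  have hε1 : ε < 1 := by simp only [hεdef]; nlinarith [sq_nonneg (α-1)]
  set c₁ : ℝ := (1/ε + C) + |lam| with hc₁def
  have hc₁ : 0 < c₁ := by
    have h1 : 0 < 1/ε := by positivity
    have := abs_nonneg lam
    simp only [hc₁def]; linarith
  obtain ⟨K, hK⟩ := hdeginf (4*c₁/ε)
  set U : ℝ := ∑' v, u v^2 with hUdef
  have hsum_u_le : ∀ s : Finset V, ∑ v ∈ s, u v^2 ≤ U :=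
    fun s => Summable.sum_le_tsum s (fun v _ => sq_nonneg _) hu
  have hU0 : 0 ≤ U := tsum_nonneg (fun v => sq_nonneg _)
  set R : ℝ := ∑ v ∈ K, α^(2 * G.dist o v) * u v^2 with hRdef
  have hR0 : 0 ≤ R := Finset.sum_nonneg (fun v _ => by positivity)
  set M₀ : ℝ := (4/ε) * (c₁ * R + D/(2*ε) * U) with hM₀def
  have hball := agmon_ball_finite G hconn o
  have key : ∀ N : ℕ,
      ∑ v ∈ (hball (2*N+1)).toFinset,
        (G.degree v : ℝ) * (agmonCut G o α N v)^2 * u v^2 ≤ M₀ := by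
    intro N
    set q : V → ℝ := agmonCut G o α N with hqdef
    set B3 : Finset V := (hball (2*N+1)).toFinset with hB3def
    have hmemB3 : ∀ x, x ∈ B3 ↔ G.dist o x ≤ 2*N+1 := by
      intro x; simp [hB3def]
    have hq0 : ∀ x, 0 ≤ q x := fun x => agmonCut_nonneg hα0
    have hqz : ∀ x, ¬ (G.dist o x ≤ 2*N) → q x = 0 := fun x h => agmonCut_eq_zero h
    set φ : V → ℝ := fun x => q x * u x with hφdef
    have hφz : ∀ x, ¬ (G.dist o x ≤ 2*N) → φ x = 0 := by
      intro x h; simp [hφdef, hqz x h]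
    have hnbr : ∀ x, G.dist o x ≤ 2*N → G.neighborFinset x ⊆ B3 := by
      intro x hx y hy
      rw [SimpleGraph.mem_neighborFinset] at hy
      rw [hmemB3]
      have := agmon_dist_adj (o := o) hconn hy
      omega
    have hfilter : ∀ x, G.dist o x ≤ 2*N → B3.filter (G.Adj x) = G.neighborFinset x := by
      intro x hx
      ext y
      simp only [Finset.mem_filter, SimpleGraph.mem_neighborFinset]
      constructor
      · exact fun h => h.2
      · intro h
        exact ⟨hnbr x hx (by rwa [SimpleGraph.mem_neighborFinset]), h⟩
    have hcard : ∀ x, ((B3.filter (G.Adj x)).card : ℝ) ≤ (G.degree x : ℝ) := by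
      intro x
      rw [SimpleGraph.degree]
      exact_mod_cast Finset.card_le_card
        (fun y hy => by
          rw [SimpleGraph.mem_neighborFinset]
          exact (Finset.mem_filter.mp hy).2)
    set Sdeg : ℝ := ∑ v ∈ B3, (G.degree v : ℝ) * (q v)^2 * u v^2 with hSdegdef
    set SΦ : ℝ := ∑ v ∈ B3, (q v)^2 * u v^2 with hSΦdef
    have hSdeg0 : 0 ≤ Sdeg := Finset.sum_nonneg (fun v _ => by positivity)
    have hSΦ0 : 0 ≤ SΦ := Finset.sum_nonneg (fun v _ => by positivity)
    -- apply the form inequality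
    have hsupp_fin : (Function.support φ).Finite := by
      apply Set.Finite.subset (hball (2*N))
      intro x hx
      simp only [Set.mem_setOf_eq]
      by_contra h
      exact hx (hφz x h)
    have H := hform ε hε0 hε1 φ hsupp_fin
    -- LHS conversion
    have hLHS : ∑' x : V, ((1 - ε) * (G.degree x : ℝ) - (1 / ε + C)) * φ x ^ 2
        = (1-ε) * Sdeg - (1/ε + C) * SΦ := by
      rw [tsum_eq_sum (s := B3) (f := fun x => ((1 - ε) * (G.degree x : ℝ) - (1 / ε + C)) * φ x ^ 2)
        (by
          intro x hx
          show ((1 - ε) * (G.degree x : ℝ) - (1 / ε + C)) * φ x ^ 2 = 0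
          have hd : ¬ (G.dist o x ≤ 2*N) := by
            rw [hmemB3] at hx; omega
          rw [hφz x hd]
          ring)]
      simp only [hSdegdef, hSΦdef, Finset.mul_sum, ← Finset.sum_sub_distrib]
      apply Finset.sum_congr rfl
      intro x _
      simp only [hφdef]
      ring
    -- RHS conversion
    have hRHS : ∑' p : V × V, (if G.Adj p.1 p.2 then (φ p.1 - φ p.2) ^ 2 else 0)
        = ∑ x ∈ B3, ∑ y ∈ B3, (if G.Adj x y then (φ x - φ y)^2 else 0) := by
      rw [tsum_eq_sum (s := B3 ×ˢ B3)
        (f := fun p : V × V => if G.Adj p.1 p.2 then (φ p.1 - φ p.2)^2 else 0)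
        (by
          intro p hp
          show (if G.Adj p.1 p.2 then (φ p.1 - φ p.2)^2 else 0) = 0
          by_cases hadj : G.Adj p.1 p.2
          · rw [if_pos hadj]
            rw [Finset.mem_product, not_and_or] at hp
            have d1 := agmon_dist_adj (o := o) hconn hadj
            have d2 := agmon_dist_adj (o := o) hconn hadj.symm
            have h12 : φ p.1 = 0 ∧ φ p.2 = 0 := by
              rcases hp with h | h
              · rw [hmemB3] at h
                exact ⟨hφz _ (by omega), hφz _ (by omega)⟩
              · rw [hmemB3] at h
                exact ⟨hφz _ (by omega), hφz _ (by omega)⟩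
            rw [h12.1, h12.2]
            ring
          · rw [if_neg hadj])]
      exact Finset.sum_product' (s := B3) (t := B3)
        (f := fun x y => if G.Adj x y then (φ x - φ y)^2 else 0)
    -- the summation identity
    have hswapT2 : ∑ x ∈ B3, ∑ y ∈ B3, (if G.Adj x y then (q y)^2 * u y * (u x - u y) else 0)
        = - ∑ x ∈ B3, ∑ y ∈ B3, (if G.Adj x y then (q x)^2 * u x * (u x - u y) else 0) := by
      rw [Finset.sum_comm, ← Finset.sum_neg_distrib]
      refine Finset.sum_congr rfl (fun a _ => ?_)
      rw [← Finset.sum_neg_distrib]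
      refine Finset.sum_congr rfl (fun b _ => ?_)
      by_cases h : G.Adj a b
      · rw [if_pos h.symm, if_pos h]; ring
      · rw [if_neg (fun h' => h h'.symm), if_neg h]; ring
    have hT1sum : ∑ x ∈ B3, ∑ y ∈ B3, (if G.Adj x y then (q x)^2 * u x * (u x - u y) else 0)
        = lam * SΦ := by
      have hper : ∀ x ∈ B3, ∑ y ∈ B3, (if G.Adj x y then (q x)^2 * u x * (u x - u y) else 0)
          = (q x)^2 * u x * (lam * u x) := by
        intro x _
        have hfac : ∀ y, (if G.Adj x y then (q x)^2 * u x * (u x - u y) else 0)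
            = (q x)^2 * u x * (if G.Adj x y then (u x - u y) else 0) := by
          intro y
          by_cases h : G.Adj x y
          · rw [if_pos h, if_pos h]
          · rw [if_neg h, if_neg h]; ring
        rw [Finset.sum_congr rfl (fun y _ => hfac y), ← Finset.mul_sum]
        by_cases hx2 : G.dist o x ≤ 2*N
        · rw [← Finset.sum_filter, hfilter x hx2, heig x]
        · rw [hqz x hx2]; ring
      rw [Finset.sum_congr rfl hper, hSΦdef, Finset.mul_sum]
      exact Finset.sum_congr rfl (fun x _ => by ring)
    have hid : ∑ x ∈ B3, ∑ y ∈ B3, (if G.Adj x y then (φ x - φ y)^2 else 0)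
        = 2*lam*SΦ + ∑ x ∈ B3, ∑ y ∈ B3,
            (if G.Adj x y then (q x - q y)^2 * (u x * u y) else 0) := by
      have hsplit : ∀ x y, (if G.Adj x y then (φ x - φ y)^2 else 0)
          = ((if G.Adj x y then (q x)^2 * u x * (u x - u y) else 0)
              - (if G.Adj x y then (q y)^2 * u y * (u x - u y) else 0))
            + (if G.Adj x y then (q x - q y)^2 * (u x * u y) else 0) := by
        intro x y
        by_cases h : G.Adj x y
        · rw [if_pos h, if_pos h, if_pos h, if_pos h]
          simp only [hφdef]
          ring
        · rw [if_neg h, if_neg h, if_neg h, if_neg h]; ring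
      calc ∑ x ∈ B3, ∑ y ∈ B3, (if G.Adj x y then (φ x - φ y)^2 else 0)
          = ∑ x ∈ B3, ∑ y ∈ B3,
              (((if G.Adj x y then (q x)^2 * u x * (u x - u y) else 0)
                - (if G.Adj x y then (q y)^2 * u y * (u x - u y) else 0))
               + (if G.Adj x y then (q x - q y)^2 * (u x * u y) else 0)) := by
            exact Finset.sum_congr rfl (fun x _ => Finset.sum_congr rfl (fun y _ => hsplit x y))
        _ = ((∑ x ∈ B3, ∑ y ∈ B3, (if G.Adj x y then (q x)^2 * u x * (u x - u y) else 0))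
              - (∑ x ∈ B3, ∑ y ∈ B3, (if G.Adj x y then (q y)^2 * u y * (u x - u y) else 0)))
            + ∑ x ∈ B3, ∑ y ∈ B3, (if G.Adj x y then (q x - q y)^2 * (u x * u y) else 0) := by
            simp only [Finset.sum_add_distrib, Finset.sum_sub_distrib]
        _ = 2*lam*SΦ + ∑ x ∈ B3, ∑ y ∈ B3,
              (if G.Adj x y then (q x - q y)^2 * (u x * u y) else 0) := by
            rw [hswapT2, hT1sum]; ring
    -- split the boundary-interaction term into interior and boundary parts
    have hBdsplit : ∑ x ∈ B3, ∑ y ∈ B3, (if G.Adj x y then (q x - q y)^2 * (u x * u y) else 0)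
        = (∑ x ∈ B3, ∑ y ∈ B3, (if G.Adj x y ∧ G.dist o x ≤ 2*N ∧ G.dist o y ≤ 2*N
              then (q x - q y)^2 * (u x * u y) else 0))
          + (∑ x ∈ B3, ∑ y ∈ B3, (if G.Adj x y ∧ ¬(G.dist o x ≤ 2*N ∧ G.dist o y ≤ 2*N)
              then (q x - q y)^2 * (u x * u y) else 0)) := by
      rw [← Finset.sum_add_distrib]
      refine Finset.sum_congr rfl (fun x _ => ?_)
      rw [← Finset.sum_add_distrib]
      refine Finset.sum_congr rfl (fun y _ => ?_)
      by_cases h : G.Adj x y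
      · by_cases hb : (G.dist o x ≤ 2*N ∧ G.dist o y ≤ 2*N)
        · rw [if_pos h, if_pos ⟨h, hb.1, hb.2⟩, if_neg (by tauto)]; ring
        · rw [if_pos h, if_neg (by tauto), if_pos ⟨h, hb⟩]; ring
      · rw [if_neg h, if_neg (by tauto), if_neg (by tauto)]; ring
    -- interior bound
    have hF1 : ∑ x ∈ B3, ∑ y ∈ B3, (if G.Adj x y then (q x * q y) * u x^2 else 0)
        ≤ α * Sdeg := by
      rw [hSdegdef, Finset.mul_sum]
      refine Finset.sum_le_sum (fun x _ => ?_)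
      have hfac : ∀ y, (if G.Adj x y then (q x * q y) * u x^2 else 0)
          = (q x * u x^2) * (if G.Adj x y then q y else 0) := by
        intro y
        by_cases h : G.Adj x y
        · rw [if_pos h, if_pos h]; ring
        · rw [if_neg h, if_neg h]; ring
      rw [Finset.sum_congr rfl (fun y _ => hfac y), ← Finset.mul_sum]
      by_cases hx2 : G.dist o x ≤ 2*N
      · have hinner : ∑ y ∈ B3, (if G.Adj x y then q y else 0)
            ≤ (G.degree x : ℝ) * (α * q x) := by
          rw [← Finset.sum_filter, hfilter x hx2]
          calc ∑ y ∈ G.neighborFinset x, q y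
              ≤ ∑ _y ∈ G.neighborFinset x, α * q x := by
                refine Finset.sum_le_sum (fun y hy => ?_)
                rw [SimpleGraph.mem_neighborFinset] at hy
                exact agmonCut_step hconn hα1 hy hx2
            _ = (G.degree x : ℝ) * (α * q x) := by
                rw [Finset.sum_const, SimpleGraph.degree, nsmul_eq_mul]
        calc (q x * u x^2) * ∑ y ∈ B3, (if G.Adj x y then q y else 0)
            ≤ (q x * u x^2) * ((G.degree x : ℝ) * (α * q x)) := by
              refine mul_le_mul_of_nonneg_left hinner ?_
              have := hq0 x
              positivity
          _ = α * ((G.degree x : ℝ) * q x^2 * u x^2) := by ring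
      · rw [hqz x hx2]
        have hinner0 : 0 ≤ ∑ y ∈ B3, (if G.Adj x y then q y else 0) :=
          Finset.sum_nonneg (fun y _ => by
            split
            · exact hq0 y
            · exact le_refl 0)
        have hl : (0:ℝ) * u x ^ 2 * ∑ y ∈ B3, (if G.Adj x y then q y else 0) = 0 := by ring
        rw [hl]
        positivity
    have hswapF : ∑ x ∈ B3, ∑ y ∈ B3, (if G.Adj x y then (q x * q y) * u y^2 else 0)
        = ∑ x ∈ B3, ∑ y ∈ B3, (if G.Adj x y then (q x * q y) * u x^2 else 0) := by
      rw [Finset.sum_comm]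
      refine Finset.sum_congr rfl (fun a _ => Finset.sum_congr rfl (fun b _ => ?_))
      by_cases h : G.Adj a b
      · rw [if_pos h.symm, if_pos h]; ring
      · rw [if_neg (fun h' => h h'.symm), if_neg h]
    have hInt : ∑ x ∈ B3, ∑ y ∈ B3, (if G.Adj x y ∧ G.dist o x ≤ 2*N ∧ G.dist o y ≤ 2*N
            then (q x - q y)^2 * (u x * u y) else 0)
        ≤ (α-1)^2 * Sdeg := by
      have hc0 : (0:ℝ) ≤ (α-1)^2/α := by positivity
      have step1 : ∑ x ∈ B3, ∑ y ∈ B3, (if G.Adj x y ∧ G.dist o x ≤ 2*N ∧ G.dist o y ≤ 2*N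
              then (q x - q y)^2 * (u x * u y) else 0)
          ≤ ∑ x ∈ B3, ∑ y ∈ B3, (if G.Adj x y
              then ((α-1)^2/α) * ((q x * q y) * ((u x^2 + u y^2)/2)) else 0) := by
        refine Finset.sum_le_sum (fun x _ => Finset.sum_le_sum (fun y _ => ?_))
        by_cases hc : G.Adj x y ∧ G.dist o x ≤ 2*N ∧ G.dist o y ≤ 2*N
        · rw [if_pos hc, if_pos hc.1]
          have h1 : (q x - q y)^2 ≤ (α-1)^2/α * (q x * q y) :=
            agmonCut_ratio hconn hα1 hc.1 hc.2.1 hc.2.2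
          have h2 : u x * u y ≤ (u x^2 + u y^2)/2 := by nlinarith [sq_nonneg (u x - u y)]
          calc (q x - q y)^2 * (u x * u y)
              ≤ (q x - q y)^2 * ((u x^2 + u y^2)/2) :=
                mul_le_mul_of_nonneg_left h2 (sq_nonneg _)
            _ ≤ ((α-1)^2/α * (q x * q y)) * ((u x^2 + u y^2)/2) :=
                mul_le_mul_of_nonneg_right h1 (by positivity)
            _ = ((α-1)^2/α) * ((q x * q y) * ((u x^2 + u y^2)/2)) := by ring
        · rw [if_neg hc]
          split
          · have h1 := hq0 x
            have h2 := hq0 y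
            positivity
          · exact le_refl 0
      have step2 : ∑ x ∈ B3, ∑ y ∈ B3, (if G.Adj x y
              then ((α-1)^2/α) * ((q x * q y) * ((u x^2 + u y^2)/2)) else 0)
          = ((α-1)^2/α) * ∑ x ∈ B3, ∑ y ∈ B3, (if G.Adj x y then (q x * q y) * u x^2 else 0) := by
        have hterm : ∀ x y, (if G.Adj x y
              then ((α-1)^2/α) * ((q x * q y) * ((u x^2 + u y^2)/2)) else 0)
            = ((α-1)^2/α) * (((if G.Adj x y then (q x * q y) * u x^2 else 0)
                + (if G.Adj x y then (q x * q y) * u y^2 else 0))/2) := by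
          intro x y
          by_cases h : G.Adj x y
          · rw [if_pos h, if_pos h, if_pos h]; ring
          · rw [if_neg h, if_neg h, if_neg h]; ring
        calc ∑ x ∈ B3, ∑ y ∈ B3, (if G.Adj x y
                then ((α-1)^2/α) * ((q x * q y) * ((u x^2 + u y^2)/2)) else 0)
            = ∑ x ∈ B3, ∑ y ∈ B3, ((α-1)^2/α) * (((if G.Adj x y then (q x * q y) * u x^2 else 0)
                + (if G.Adj x y then (q x * q y) * u y^2 else 0))/2) :=
              Finset.sum_congr rfl (fun x _ => Finset.sum_congr rfl (fun y _ => hterm x y))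
          _ = ((α-1)^2/α) * (((∑ x ∈ B3, ∑ y ∈ B3, (if G.Adj x y then (q x * q y) * u x^2 else 0))
                + ∑ x ∈ B3, ∑ y ∈ B3, (if G.Adj x y then (q x * q y) * u y^2 else 0))/2) := by
              simp only [← Finset.mul_sum, ← Finset.sum_add_distrib, ← Finset.sum_div]
          _ = ((α-1)^2/α) * ∑ x ∈ B3, ∑ y ∈ B3,
                (if G.Adj x y then (q x * q y) * u x^2 else 0) := by
              rw [hswapF]; ring
      calc ∑ x ∈ B3, ∑ y ∈ B3, (if G.Adj x y ∧ G.dist o x ≤ 2*N ∧ G.dist o y ≤ 2*N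
              then (q x - q y)^2 * (u x * u y) else 0)
          ≤ ((α-1)^2/α) * ∑ x ∈ B3, ∑ y ∈ B3,
              (if G.Adj x y then (q x * q y) * u x^2 else 0) := by rw [← step2]; exact step1
        _ ≤ ((α-1)^2/α) * (α * Sdeg) := mul_le_mul_of_nonneg_left hF1 hc0
        _ = (α-1)^2 * Sdeg := by field_simp
    -- boundary bound
    have hinv2e : (0:ℝ) ≤ 1/(2*ε) := le_of_lt (one_div_pos.mpr (by linarith))
    have hbnd_nonneg : ∀ a b : ℝ, 0 ≤ ε/2*a^2 + 1/(2*ε)*b^2 := fun a b =>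
      add_nonneg (mul_nonneg (by linarith) (sq_nonneg a)) (mul_nonneg hinv2e (sq_nonneg b))
    have hA : ∑ x ∈ B3, ∑ y ∈ B3,
          (if G.Adj x y ∧ G.dist o x ≤ 2*N ∧ ¬ G.dist o y ≤ 2*N then u x^2 else 0)
        ≤ Sdeg := by
      rw [hSdegdef]
      refine Finset.sum_le_sum (fun x _ => ?_)
      have hterm : ∀ y, (if G.Adj x y ∧ G.dist o x ≤ 2*N ∧ ¬ G.dist o y ≤ 2*N
            then u x^2 else 0) ≤ (if G.Adj x y then q x^2 * u x^2 else 0) := by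
        intro y
        by_cases hc : G.Adj x y ∧ G.dist o x ≤ 2*N ∧ ¬ G.dist o y ≤ 2*N
        · rw [if_pos hc, if_pos hc.1]
          have d1 := agmon_dist_adj (o := o) hconn hc.1
          have d2 := agmon_dist_adj (o := o) hconn hc.1.symm
          have hqx : q x = 1 := by
            rw [hqdef]
            exact agmonCut_eq_one (by omega)
          rw [hqx]
          norm_num
        · rw [if_neg hc]
          split
          · positivity
          · exact le_refl 0
      calc ∑ y ∈ B3, (if G.Adj x y ∧ G.dist o x ≤ 2*N ∧ ¬ G.dist o y ≤ 2*N
              then u x^2 else 0)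
          ≤ ∑ y ∈ B3, (if G.Adj x y then q x^2 * u x^2 else 0) :=
            Finset.sum_le_sum (fun y _ => hterm y)
        _ = ((B3.filter (G.Adj x)).card : ℝ) * (q x^2 * u x^2) := by
            rw [← Finset.sum_filter, Finset.sum_const, nsmul_eq_mul]
        _ ≤ (G.degree x : ℝ) * (q x^2 * u x^2) :=
            mul_le_mul_of_nonneg_right (hcard x) (by positivity)
        _ = (G.degree x : ℝ) * q x^2 * u x^2 := by ring
    have hB : ∑ x ∈ B3, ∑ y ∈ B3,
          (if G.Adj x y ∧ G.dist o x ≤ 2*N ∧ ¬ G.dist o y ≤ 2*N then u y^2 else 0)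
        ≤ (D:ℝ) * U := by
      rw [Finset.sum_comm]
      have hper : ∀ y ∈ B3, ∑ x ∈ B3,
            (if G.Adj x y ∧ G.dist o x ≤ 2*N ∧ ¬ G.dist o y ≤ 2*N then u y^2 else 0)
          ≤ (D:ℝ) * u y^2 := by
        intro y hy
        have heq : ∑ x ∈ B3,
              (if G.Adj x y ∧ G.dist o x ≤ 2*N ∧ ¬ G.dist o y ≤ 2*N then u y^2 else 0)
            = ((B3.filter (fun x => G.Adj x y ∧ G.dist o x ≤ 2*N ∧ ¬ G.dist o y ≤ 2*N)).card : ℝ)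
                * u y^2 := by
          rw [← Finset.sum_filter, Finset.sum_const, nsmul_eq_mul]
        rw [heq]
        refine mul_le_mul_of_nonneg_right ?_ (sq_nonneg _)
        have hcardD : (B3.filter (fun x => G.Adj x y ∧ G.dist o x ≤ 2*N
            ∧ ¬ G.dist o y ≤ 2*N)).card ≤ D := by
          by_cases hy2 : G.dist o y ≤ 2*N
          · have hemp : B3.filter (fun x => G.Adj x y ∧ G.dist o x ≤ 2*N
                ∧ ¬ G.dist o y ≤ 2*N) = ∅ :=
              Finset.filter_eq_empty_iff.mpr (fun x _ hc => hc.2.2 hy2)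
            rw [hemp]
            simp
          · refine le_trans (Finset.card_le_card ?_) (hD y)
            intro x hx
            rw [Finset.mem_filter] at hx
            obtain ⟨hxB, hadj, hdx, hdy⟩ := hx
            rw [Finset.mem_filter, SimpleGraph.mem_neighborFinset]
            have hyB : G.dist o y ≤ 2*N+1 := (hmemB3 y).mp hy
            have d1 := agmon_dist_adj (o := o) hconn hadj
            have d2 := agmon_dist_adj (o := o) hconn hadj.symm
            exact ⟨hadj.symm, by omega⟩
        exact_mod_cast hcardD
      calc ∑ y ∈ B3, ∑ x ∈ B3,
              (if G.Adj x y ∧ G.dist o x ≤ 2*N ∧ ¬ G.dist o y ≤ 2*N then u y^2 else 0)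
          ≤ ∑ y ∈ B3, (D:ℝ) * u y^2 := Finset.sum_le_sum hper
        _ = (D:ℝ) * ∑ y ∈ B3, u y^2 := by rw [Finset.mul_sum]
        _ ≤ (D:ℝ) * U := mul_le_mul_of_nonneg_left (hsum_u_le B3) (by positivity)
    have hOut : ∑ x ∈ B3, ∑ y ∈ B3, (if G.Adj x y ∧ ¬(G.dist o x ≤ 2*N ∧ G.dist o y ≤ 2*N)
            then (q x - q y)^2 * (u x * u y) else 0)
        ≤ ε*Sdeg + ((D:ℝ)/ε)*U := by
      have hstep : ∀ x y, (if G.Adj x y ∧ ¬(G.dist o x ≤ 2*N ∧ G.dist o y ≤ 2*N)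
            then (q x - q y)^2 * (u x * u y) else 0)
          ≤ (if G.Adj x y ∧ G.dist o x ≤ 2*N ∧ ¬ G.dist o y ≤ 2*N
              then ε/2*u x^2 + 1/(2*ε)*u y^2 else 0)
            + (if G.Adj y x ∧ G.dist o y ≤ 2*N ∧ ¬ G.dist o x ≤ 2*N
              then ε/2*u y^2 + 1/(2*ε)*u x^2 else 0) := by
        intro x y
        by_cases h : G.Adj x y ∧ ¬(G.dist o x ≤ 2*N ∧ G.dist o y ≤ 2*N)
        · obtain ⟨hadj, hnb⟩ := h
          rw [if_pos ⟨hadj, hnb⟩]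
          have d1 := agmon_dist_adj (o := o) hconn hadj
          have d2 := agmon_dist_adj (o := o) hconn hadj.symm
          by_cases h1 : G.dist o x ≤ 2*N
          · have h2 : ¬ G.dist o y ≤ 2*N := fun hh => hnb ⟨h1, hh⟩
            have hqx : q x = 1 := by
              rw [hqdef]; exact agmonCut_eq_one (by omega)
            have hqy : q y = 0 := hqz y h2
            rw [if_pos ⟨hadj, h1, h2⟩, if_neg (fun hc => h2 hc.2.1), hqx, hqy]
            calc ((1:ℝ) - 0)^2 * (u x * u y) = u x * u y := by ring
              _ ≤ ε/2*u x^2 + 1/(2*ε)*u y^2 := agmon_amgm hε0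
              _ = (ε/2*u x^2 + 1/(2*ε)*u y^2) + 0 := by ring
          · by_cases h2 : G.dist o y ≤ 2*N
            · have hqy : q y = 1 := by
                rw [hqdef]; exact agmonCut_eq_one (by omega)
              have hqx : q x = 0 := hqz x h1
              rw [if_neg (fun hc => h1 hc.2.1), if_pos ⟨hadj.symm, h2, h1⟩, hqx, hqy]
              calc ((0:ℝ) - 1)^2 * (u x * u y) = u y * u x := by ring
                _ ≤ ε/2*u y^2 + 1/(2*ε)*u x^2 := agmon_amgm hε0
                _ = 0 + (ε/2*u y^2 + 1/(2*ε)*u x^2) := by ring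
            · rw [hqz x h1, hqz y h2, if_neg (fun hc => h1 hc.2.1),
                if_neg (fun hc => h2 hc.2.1)]
              have : ((0:ℝ) - 0)^2 * (u x * u y) = 0 := by ring
              rw [this]
              norm_num
        · rw [if_neg h]
          have g1 : (0:ℝ) ≤ (if G.Adj x y ∧ G.dist o x ≤ 2*N ∧ ¬ G.dist o y ≤ 2*N
              then ε/2*u x^2 + 1/(2*ε)*u y^2 else 0) := by
            split
            · exact hbnd_nonneg _ _
            · exact le_refl 0
          have g2 : (0:ℝ) ≤ (if G.Adj y x ∧ G.dist o y ≤ 2*N ∧ ¬ G.dist o x ≤ 2*N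
              then ε/2*u y^2 + 1/(2*ε)*u x^2 else 0) := by
            split
            · exact hbnd_nonneg _ _
            · exact le_refl 0
          linarith
      have hsum1 : ∑ x ∈ B3, ∑ y ∈ B3, (if G.Adj x y ∧ ¬(G.dist o x ≤ 2*N ∧ G.dist o y ≤ 2*N)
              then (q x - q y)^2 * (u x * u y) else 0)
          ≤ (∑ x ∈ B3, ∑ y ∈ B3, (if G.Adj x y ∧ G.dist o x ≤ 2*N ∧ ¬ G.dist o y ≤ 2*N
              then ε/2*u x^2 + 1/(2*ε)*u y^2 else 0))
            + ∑ x ∈ B3, ∑ y ∈ B3, (if G.Adj y x ∧ G.dist o y ≤ 2*N ∧ ¬ G.dist o x ≤ 2*N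
              then ε/2*u y^2 + 1/(2*ε)*u x^2 else 0) := by
        calc ∑ x ∈ B3, ∑ y ∈ B3, (if G.Adj x y ∧ ¬(G.dist o x ≤ 2*N ∧ G.dist o y ≤ 2*N)
                then (q x - q y)^2 * (u x * u y) else 0)
            ≤ ∑ x ∈ B3, ∑ y ∈ B3,
                ((if G.Adj x y ∧ G.dist o x ≤ 2*N ∧ ¬ G.dist o y ≤ 2*N
                  then ε/2*u x^2 + 1/(2*ε)*u y^2 else 0)
                + (if G.Adj y x ∧ G.dist o y ≤ 2*N ∧ ¬ G.dist o x ≤ 2*N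
                  then ε/2*u y^2 + 1/(2*ε)*u x^2 else 0)) :=
              Finset.sum_le_sum (fun x _ => Finset.sum_le_sum (fun y _ => hstep x y))
          _ = _ := by simp only [Finset.sum_add_distrib]
      have hswapO : ∑ x ∈ B3, ∑ y ∈ B3, (if G.Adj y x ∧ G.dist o y ≤ 2*N ∧ ¬ G.dist o x ≤ 2*N
              then ε/2*u y^2 + 1/(2*ε)*u x^2 else 0)
          = ∑ x ∈ B3, ∑ y ∈ B3, (if G.Adj x y ∧ G.dist o x ≤ 2*N ∧ ¬ G.dist o y ≤ 2*N
              then ε/2*u x^2 + 1/(2*ε)*u y^2 else 0) := Finset.sum_comm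
      have hsplitf : ∑ x ∈ B3, ∑ y ∈ B3, (if G.Adj x y ∧ G.dist o x ≤ 2*N ∧ ¬ G.dist o y ≤ 2*N
              then ε/2*u x^2 + 1/(2*ε)*u y^2 else 0)
          = ε/2 * (∑ x ∈ B3, ∑ y ∈ B3,
                (if G.Adj x y ∧ G.dist o x ≤ 2*N ∧ ¬ G.dist o y ≤ 2*N then u x^2 else 0))
            + 1/(2*ε) * (∑ x ∈ B3, ∑ y ∈ B3,
                (if G.Adj x y ∧ G.dist o x ≤ 2*N ∧ ¬ G.dist o y ≤ 2*N then u y^2 else 0)) := by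
        simp only [Finset.mul_sum, ← Finset.sum_add_distrib]
        refine Finset.sum_congr rfl (fun x _ => Finset.sum_congr rfl (fun y _ => ?_))
        by_cases h : G.Adj x y ∧ G.dist o x ≤ 2*N ∧ ¬ G.dist o y ≤ 2*N
        · rw [if_pos h, if_pos h, if_pos h]
        · rw [if_neg h, if_neg h, if_neg h]; ring
      have m1 : ε/2 * (∑ x ∈ B3, ∑ y ∈ B3,
            (if G.Adj x y ∧ G.dist o x ≤ 2*N ∧ ¬ G.dist o y ≤ 2*N then u x^2 else 0))
          ≤ ε/2 * Sdeg := mul_le_mul_of_nonneg_left hA (by linarith)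
      have m2 : 1/(2*ε) * (∑ x ∈ B3, ∑ y ∈ B3,
            (if G.Adj x y ∧ G.dist o x ≤ 2*N ∧ ¬ G.dist o y ≤ 2*N then u y^2 else 0))
          ≤ 1/(2*ε) * ((D:ℝ) * U) := mul_le_mul_of_nonneg_left hB hinv2e
      have hfin : ε/2 * Sdeg + 1/(2*ε) * ((D:ℝ)*U) + (ε/2 * Sdeg + 1/(2*ε) * ((D:ℝ)*U))
          = ε*Sdeg + ((D:ℝ)/ε)*U := by
        field_simp
        ring
      linarith [hsum1, hswapO, hsplitf, m1, m2]
    -- assemble everything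
    rw [hLHS, hRHS, hid, hBdsplit] at H
    have hlam : lam*SΦ ≤ |lam| * SΦ := mul_le_mul_of_nonneg_right (le_abs_self lam) hSΦ0
    have hαεS : (α-1)^2*Sdeg = 2*Sdeg - 4*(ε*Sdeg) := by rw [hεdef]; ring
    have hc₁S : c₁*SΦ = (1/ε)*SΦ + C*SΦ + |lam| * SΦ := by rw [hc₁def]; ring
    have hmain : ε/2*Sdeg ≤ c₁*SΦ + (D:ℝ)/(2*ε)*U := by
      have hDe : ((D:ℝ)/ε)*U = 2*((D:ℝ)/(2*ε)*U) := by
        field_simp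
      nlinarith [H, hInt, hOut, hlam, hαεS, hc₁S, hDe]
    have hSΦle : SΦ ≤ R + ε/(4*c₁) * Sdeg := by
      have hcoef : (0:ℝ) ≤ ε/(4*c₁) := div_nonneg hε0.le (by linarith)
      have hKpart : ∑ v ∈ B3.filter (fun v => v ∈ K), q v^2*u v^2 ≤ R := by
        calc ∑ v ∈ B3.filter (fun v => v ∈ K), q v^2*u v^2
            ≤ ∑ v ∈ B3.filter (fun v => v ∈ K), α^(2*G.dist o v)*u v^2 :=
              Finset.sum_le_sum (fun v _ => mul_le_mul_of_nonneg_right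
                (by rw [hqdef]; exact agmonCut_sq_le hα1) (sq_nonneg _))
          _ ≤ ∑ v ∈ K, α^(2*G.dist o v)*u v^2 :=
              Finset.sum_le_sum_of_subset_of_nonneg
                (fun v hv => (Finset.mem_filter.mp hv).2) (fun v _ _ => by positivity)
          _ = R := hRdef.symm
      have hKc : ∑ v ∈ B3.filter (fun v => v ∉ K), q v^2*u v^2 ≤ ε/(4*c₁)*Sdeg := by
        calc ∑ v ∈ B3.filter (fun v => v ∉ K), q v^2*u v^2
            ≤ ∑ v ∈ B3.filter (fun v => v ∉ K), ε/(4*c₁)*((G.degree v:ℝ)*q v^2*u v^2) := by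
              refine Finset.sum_le_sum (fun v hv => ?_)
              have hvK : v ∉ K := by
                have := (Finset.mem_filter.mp hv).2
                simpa using this
              have hdeg := hK v hvK
              have h1 : (1:ℝ) ≤ ε/(4*c₁)*(G.degree v:ℝ) := by
                have he : ε/(4*c₁)*(4*c₁/ε) = 1 := by field_simp
                calc (1:ℝ) = ε/(4*c₁)*(4*c₁/ε) := he.symm
                  _ ≤ ε/(4*c₁)*(G.degree v:ℝ) := mul_le_mul_of_nonneg_left hdeg hcoef
              calc q v^2*u v^2 = 1*(q v^2*u v^2) := by ring
                _ ≤ (ε/(4*c₁)*(G.degree v:ℝ))*(q v^2*u v^2) :=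
                  mul_le_mul_of_nonneg_right h1 (by positivity)
                _ = ε/(4*c₁)*((G.degree v:ℝ)*q v^2*u v^2) := by ring
          _ = ε/(4*c₁)*∑ v ∈ B3.filter (fun v => v ∉ K), (G.degree v:ℝ)*q v^2*u v^2 := by
              rw [Finset.mul_sum]
          _ ≤ ε/(4*c₁)*Sdeg := by
              refine mul_le_mul_of_nonneg_left ?_ hcoef
              rw [hSdegdef]
              exact Finset.sum_le_sum_of_subset_of_nonneg (Finset.filter_subset _ _)
                (fun v _ _ => by positivity)
      have hsplitS : ∑ v ∈ B3.filter (fun v => v ∈ K), q v^2*u v^2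
          + ∑ v ∈ B3.filter (fun v => v ∉ K), q v^2*u v^2 = SΦ := by
        rw [hSΦdef]
        exact Finset.sum_filter_add_sum_filter_not B3 (fun v => v ∈ K) _
      linarith [hKpart, hKc, hsplitS]
    have hfinal2 : ε/4*Sdeg ≤ c₁*R + (D:ℝ)/(2*ε)*U := by
      have hm := mul_le_mul_of_nonneg_left hSΦle hc₁.le
      have hexp : c₁*(R + ε/(4*c₁)*Sdeg) = c₁*R + ε/4*Sdeg := by
        field_simp
      nlinarith [hmain, hm, hexp]
    have hSdegeq : Sdeg = (4/ε)*(ε/4*Sdeg) := by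
      field_simp
    calc Sdeg = (4/ε)*(ε/4*Sdeg) := hSdegeq
      _ ≤ (4/ε)*(c₁*R + (D:ℝ)/(2*ε)*U) :=
        mul_le_mul_of_nonneg_left hfinal2 (by positivity)
      _ = M₀ := hM₀def.symm
  -- conclude
  apply summable_of_sum_le (c := M₀)
  · intro v
    positivity
  · intro F
    set N := F.sup (G.dist o) with hNdef
    have hsub : F ⊆ (hball (2*N+1)).toFinset := by
      intro v hv
      simp only [Set.Finite.mem_toFinset, Set.mem_setOf_eq]
      have : G.dist o v ≤ N := Finset.le_sup (f := G.dist o) hv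
      omega
    have heq : ∀ v ∈ F, (G.degree v : ℝ) * α ^ (2 * G.dist o v) * u v ^ 2
        = (G.degree v : ℝ) * (agmonCut G o α N v)^2 * u v^2 := by
      intro v hv
      have hdv : G.dist o v ≤ N := Finset.le_sup (f := G.dist o) hv
      rw [agmonCut_eq_pow hdv, ← pow_mul]
      ring_nf
    rw [Finset.sum_congr rfl heq]
    calc ∑ v ∈ F, (G.degree v : ℝ) * (agmonCut G o α N v)^2 * u v^2
        ≤ ∑ v ∈ (hball (2*N+1)).toFinset,
            (G.degree v : ℝ) * (agmonCut G o α N v)^2 * u v^2 :=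
          Finset.sum_le_sum_of_subset_of_nonneg hsub
            (fun v _ _ => by
              have := agmonCut_nonneg (G := G) (o := o) (N := N) (v := v) hα0
              positivity)
      _ ≤ M₀ := key N


/-- Agmon-type decay of eigenfunctions.  Let `G` be connected,
locally finite, with root `o`.  Suppose the Dirichlet form satisfies
`Q(φ) ≥ Σ_v ((1-ε)deg(v) - (1/ε + C)) φ(v)²` for all `ε ∈ (0,1)` and all
finitely supported `φ`, that `deg → ∞` outside finite sets, and that `deg₋` is
bounded.  Then every ℓ²-eigenfunction `u` of the Laplacian satisfies
`Σ_v deg(v) α^{2d(o,v)} u(v)² < ∞` for all `0 < α < 1 + √2`. -/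
theorem agmon_decay
    {V : Type*} [DecidableEq V] (G : SimpleGraph V) [G.LocallyFinite] [DecidableRel G.Adj]
    (hconn : G.Connected) (o : V) (C : ℝ) (hC : 0 ≤ C)
    (hform : ∀ ε : ℝ, 0 < ε → ε < 1 → ∀ φ : V → ℝ,
      (Function.support φ).Finite →
      ∑' v : V, ((1 - ε) * (G.degree v : ℝ) - (1 / ε + C)) * φ v ^ 2
        ≤ (1/2) * ∑' p : V × V,
            (if G.Adj p.1 p.2 then (φ p.1 - φ p.2) ^ 2 else 0))
    (hdeginf : ∀ M : ℝ, ∃ K : Finset V, ∀ v ∉ K, M ≤ (G.degree v : ℝ))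
    (hdegm : ∃ D : ℕ, ∀ v : V,
      ((G.neighborFinset v).filter (fun w => G.dist o w + 1 = G.dist o v)).card ≤ D)
    (u : V → ℝ) (lam : ℝ)
    (hu : Summable (fun v => u v ^ 2))
    (hΔu : Summable (fun v => (∑ w ∈ G.neighborFinset v, (u v - u w)) ^ 2))
    (heig : ∀ v, ∑ w ∈ G.neighborFinset v, (u v - u w) = lam * u v)
    (α : ℝ) (hα0 : 0 < α) (hα : α < 1 + Real.sqrt 2) :
    Summable (fun v => (G.degree v : ℝ) * α ^ (2 * G.dist o v) * u v ^ 2) := by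
  rcases le_or_gt 1 α with hα1 | hα1
  · exact agmon_main G hconn o C hC hform hdeginf hdegm u lam hu heig α hα1 hα
  · have h1 : Summable (fun v => (G.degree v : ℝ) * (1:ℝ) ^ (2 * G.dist o v) * u v ^ 2) := by
      refine agmon_main G hconn o C hC hform hdeginf hdegm u lam hu heig 1 le_rfl ?_
      have := Real.sqrt_pos.mpr (by norm_num : (0:ℝ) < 2)
      linarith
    refine Summable.of_nonneg_of_le (fun v => by positivity) (fun v => ?_) h1
    have hp : α ^ (2 * G.dist o v) ≤ 1 := pow_le_one₀ hα0.le hα1.le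
    have : (1:ℝ) ^ (2 * G.dist o v) = 1 := one_pow _
    rw [this]
    exact mul_le_mul_of_nonneg_right (mul_le_mul_of_nonneg_left hp (by positivity))
      (sq_nonneg _)
end

section
/- Let u, φ: V → ℝ on a locally finite graph with φ finitely supported. Then (1/2) Σ_{v∼w} u(v)² (φ(v) - φ(w))² ≥ (1/2) Σ_{v∼w} u(v) u(w) (φ(v) - φ(w))², and if u ∈ D(Δ) ⊆ ℓ²(V), the right hand side equals ⟨φu, Δ(φu)⟩ - ⟨φ²u, Δu⟩. -/
/-- For `u, φ : V → ℝ` on a locally finite graph with `φ` finitely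
supported: `(1/2) Σ_{v∼w} u(v)²(φ(v)-φ(w))² ≥ (1/2) Σ_{v∼w} u(v)u(w)(φ(v)-φ(w))²`,
and if `u ∈ D(Δ) ⊆ ℓ²`, the right hand side equals
`⟨φu, Δ(φu)⟩ - ⟨φ²u, Δu⟩`. -/
theorem caccioppoli_identity
    {V : Type*} (G : SimpleGraph V) [G.LocallyFinite] [DecidableRel G.Adj]
    (u φ : V → ℝ) (hφ : (Function.support φ).Finite) :
    ((1/2) * ∑' p : V × V,
        (if G.Adj p.1 p.2 then u p.1 * u p.2 * (φ p.1 - φ p.2) ^ 2 else 0)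
      ≤ (1/2) * ∑' p : V × V,
        (if G.Adj p.1 p.2 then u p.1 ^ 2 * (φ p.1 - φ p.2) ^ 2 else 0)) ∧
    (Summable (fun v => u v ^ 2) →
      Summable (fun v => (∑ w ∈ G.neighborFinset v, (u v - u w)) ^ 2) →
      (1/2) * ∑' p : V × V,
          (if G.Adj p.1 p.2 then u p.1 * u p.2 * (φ p.1 - φ p.2) ^ 2 else 0)
        = ∑' v : V, (φ v * u v)
            * (∑ w ∈ G.neighborFinset v, (φ v * u v - φ w * u w))
          - ∑' v : V, (φ v ^ 2 * u v)
            * (∑ w ∈ G.neighborFinset v, (u v - u w))) := by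
  classical
  set K : Finset V := hφ.toFinset with hK
  set N : Finset V := K ∪ K.biUnion (fun v => G.neighborFinset v) with hNdef
  have hφ0 : ∀ v, v ∉ K → φ v = 0 := by
    intro v hv
    by_contra h
    exact hv (hφ.mem_toFinset.mpr h)
  have hKN : ∀ v ∈ K, v ∈ N := fun v hv => Finset.mem_union_left _ hv
  have hnbrN : ∀ v ∈ K, ∀ w, G.Adj v w → w ∈ N := by
    intro v hv w hw
    exact Finset.mem_union_right _
      (Finset.mem_biUnion.mpr ⟨v, hv, (SimpleGraph.mem_neighborFinset G v w).mpr hw⟩)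
  -- the φ-difference vanishes outside N ×ˢ N
  have key : ∀ (p : V × V), G.Adj p.1 p.2 → p ∉ N ×ˢ N → φ p.1 - φ p.2 = 0 := by
    intro p hadj hp
    rw [Finset.mem_product, not_and_or] at hp
    have h1 : p.1 ∉ K ∧ p.2 ∉ K := by
      rcases hp with h | h
      · exact ⟨fun hk => h (hKN _ hk), fun hk => h (hnbrN _ hk _ hadj.symm)⟩
      · exact ⟨fun hk => h (hnbrN _ hk _ hadj), fun hk => h (hKN _ hk)⟩
    rw [hφ0 _ h1.1, hφ0 _ h1.2, sub_zero]
  -- the three pair-indexed functions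
  set f : V × V → ℝ :=
    fun p => if G.Adj p.1 p.2 then u p.1 * u p.2 * (φ p.1 - φ p.2) ^ 2 else 0 with hf
  set b : V × V → ℝ :=
    fun p => if G.Adj p.1 p.2 then u p.1 ^ 2 * (φ p.1 - φ p.2) ^ 2 else 0 with hb
  set h : V × V → ℝ :=
    fun p => if G.Adj p.1 p.2 then u p.1 * u p.2 * (φ p.1 * (φ p.1 - φ p.2)) else 0 with hh
  have hfzero : ∀ p ∉ N ×ˢ N, f p = 0 := by
    intro p hp
    simp only [hf]
    split_ifs with hadj
    · rw [key p hadj hp]; ring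
    · rfl
  have hbzero : ∀ p ∉ N ×ˢ N, b p = 0 := by
    intro p hp
    simp only [hb]
    split_ifs with hadj
    · rw [key p hadj hp]; ring
    · rfl
  have hft : ∑' p : V × V, f p = ∑ p ∈ N ×ˢ N, f p := tsum_eq_sum hfzero
  have hbt : ∑' p : V × V, b p = ∑ p ∈ N ×ˢ N, b p := tsum_eq_sum hbzero
  -- swap invariance of sums over N ×ˢ N
  have hswap : ∀ F : V × V → ℝ,
      ∑ p ∈ N ×ˢ N, F (p.2, p.1) = ∑ p ∈ N ×ˢ N, F p := by
    intro F
    rw [Finset.sum_product, Finset.sum_product]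
    exact Finset.sum_comm
  constructor
  · -- inequality
    rw [hft, hbt]
    have h2 : 2 * ∑ p ∈ N ×ˢ N, f p ≤ 2 * ∑ p ∈ N ×ˢ N, b p := by
      have hl : 2 * ∑ p ∈ N ×ˢ N, f p
          = ∑ p ∈ N ×ˢ N, (f p + f (p.2, p.1)) := by
        rw [Finset.sum_add_distrib, hswap f]; ring
      have hr : 2 * ∑ p ∈ N ×ˢ N, b p
          = ∑ p ∈ N ×ˢ N, (b p + b (p.2, p.1)) := by
        rw [Finset.sum_add_distrib, hswap b]; ring
      rw [hl, hr]
      apply Finset.sum_le_sum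
      intro p _
      simp only [hf, hb]
      by_cases hadj : G.Adj p.1 p.2
      · rw [if_pos hadj, if_pos hadj, if_pos hadj.symm, if_pos hadj.symm]
        nlinarith [sq_nonneg ((u p.1 - u p.2) * (φ p.1 - φ p.2)),
          sq_nonneg (φ p.1 - φ p.2), sq_nonneg (φ p.2 - φ p.1)]
      · have hadj' : ¬ G.Adj p.2 p.1 := fun hc => hadj hc.symm
        rw [if_neg hadj, if_neg hadj, if_neg hadj', if_neg hadj']
    linarith
  · -- identity
    intro _ _
    -- the two vertex-indexed functions
    set g₁ : V → ℝ :=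
      fun v => (φ v * u v) * (∑ w ∈ G.neighborFinset v, (φ v * u v - φ w * u w)) with hg₁
    set g₂ : V → ℝ :=
      fun v => (φ v ^ 2 * u v) * (∑ w ∈ G.neighborFinset v, (u v - u w)) with hg₂
    have hg₁zero : ∀ v ∉ N, g₁ v = 0 := by
      intro v hv
      simp only [hg₁, hφ0 v (fun hk => hv (hKN _ hk)), zero_mul]
    have hg₂zero : ∀ v ∉ N, g₂ v = 0 := by
      intro v hv
      simp only [hg₂, hφ0 v (fun hk => hv (hKN _ hk))]
      ring
    rw [tsum_eq_sum hg₁zero, tsum_eq_sum hg₂zero, hft]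
    -- both sides equal ∑ over N ×ˢ N of h
    have hstep : ∀ v ∈ N, g₁ v - g₂ v = ∑ w ∈ N, h (v, w) := by
      intro v hv
      by_cases hvK : v ∈ K
      · have hnsub : G.neighborFinset v ⊆ N := by
          intro w hw
          exact hnbrN v hvK w ((SimpleGraph.mem_neighborFinset G v w).mp hw)
        have : ∑ w ∈ N, h (v, w) = ∑ w ∈ G.neighborFinset v,
            (u v * u w * (φ v * (φ v - φ w))) := by
          rw [← Finset.sum_subset hnsub]
          · apply Finset.sum_congr rfl
            intro w hw
            simp only [hh, if_pos ((SimpleGraph.mem_neighborFinset G v w).mp hw)]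
          · intro w _ hw
            simp only [hh, if_neg (fun hc =>
              hw ((SimpleGraph.mem_neighborFinset G v w).mpr hc))]
        rw [this]
        simp only [hg₁, hg₂, Finset.mul_sum, ← Finset.sum_sub_distrib]
        apply Finset.sum_congr rfl
        intro w _
        ring
      · have hφv : φ v = 0 := hφ0 v hvK
        have : ∑ w ∈ N, h (v, w) = 0 := by
          apply Finset.sum_eq_zero
          intro w _
          simp only [hh, hφv]
          split_ifs <;> ring
        rw [this, hg₁ , hg₂]
        simp [hφv]
    rw [← Finset.sum_sub_distrib, Finset.sum_congr rfl hstep, ← Finset.sum_product']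
    -- finally : ∑ f = 2 ∑ h
    have h2 : ∑ p ∈ N ×ˢ N, f p = 2 * ∑ p ∈ N ×ˢ N, h p := by
      have : 2 * ∑ p ∈ N ×ˢ N, h p = ∑ p ∈ N ×ˢ N, (h p + h (p.2, p.1)) := by
        rw [Finset.sum_add_distrib, hswap h]; ring
      rw [this]
      apply Finset.sum_congr rfl
      intro p _
      simp only [hf, hh]
      by_cases hadj : G.Adj p.1 p.2
      · rw [if_pos hadj, if_pos hadj, if_pos hadj.symm]
        ring
      · have hadj' : ¬ G.Adj p.2 p.1 := fun hc => hadj hc.symm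
        rw [if_neg hadj, if_neg hadj, if_neg hadj']
        ring
    rw [h2]
    ring
end
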